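/- arXiv:2410.20462 — 3 statements merged into one kernel-verified Lean document; each statement's English description precedes it below -/
import Mathlib

section
/- For every integer n ≥ 4 with n ≡ 1 (mod 3), the tree T*_n satisfies Φ(T*_n) = 3^{(n−1)/3} + (n−1)/3. -/
/-- A dissociation set: the induced subgraph has maximum degree at most 1. -/
def SimpleGraph.IsDissocSet {V : Type*} (G : SimpleGraph V) (S : Finset V) : Prop :=
  ∀ a ∈ S, ∀ b ∈ S, ∀ c ∈ S, G.Adj a b → G.Adj a c → b = c

/-- A maximal dissociation set. -/
def SimpleGraph.IsMaxDissocSet {V : Type*} (G : SimpleGraph V) (S : Finset V) : Prop :=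
  G.IsDissocSet S ∧ ∀ T : Finset V, G.IsDissocSet T → S ⊆ T → S = T

/-- `G.phi` is the number of maximal dissociation sets of `G`. -/
noncomputable def SimpleGraph.phi {V : Type*} (G : SimpleGraph V) : ℕ :=
  Set.ncard {S : Finset V | G.IsMaxDissocSet S}

/-- Disjoint union of `k` copies of `G`. -/
def SimpleGraph.copies {V : Type*} (k : ℕ) (G : SimpleGraph V) :
    SimpleGraph (Fin k × V) where
  Adj a b := a.1 = b.1 ∧ G.Adj a.2 b.2
  symm := ⟨fun a b h => ⟨h.1.symm, G.symm.symm _ _ h.2⟩⟩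
  loopless := ⟨fun a h => G.loopless.irrefl a.2 h.2⟩

/-- `TstarTree k` is the tree `T*_{3k+1}`: `k` copies of `P₃` plus a new vertex joined to
the middle vertex of each copy. -/
def TstarTree (k : ℕ) : SimpleGraph (Option (Fin k × Fin 3)) :=
  SimpleGraph.fromRel (fun a b =>
    (∃ i, a = some (i, 1) ∧ (b = some (i, 0) ∨ b = some (i, 2))) ∨
    (∃ i, a = none ∧ b = some (i, 1)))

/-- `T*₈`: two copies of `K_{1,3}` (centers 0 and 4) with an edge between leaves 3 and 5. -/
def Tstar8 : SimpleGraph (Fin 8) :=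
  SimpleGraph.fromRel (fun a b =>
    ((a : ℕ), (b : ℕ)) ∈ [(0,1), (0,2), (0,3), (4,5), (4,6), (4,7), (3,5)])

/-- `T*₉`: two copies of `K_{1,3}` (centers 0 and 4) plus a new vertex 8 joined to
leaves 3 and 5. -/
def Tstar9 : SimpleGraph (Fin 9) :=
  SimpleGraph.fromRel (fun a b =>
    ((a : ℕ), (b : ℕ)) ∈ [(0,1), (0,2), (0,3), (4,5), (4,6), (4,7), (8,3), (8,5)])

noncomputable def f1 (n : ℕ) : ℕ :=
  if n = 5 then 5
  else if n % 3 = 0 then 3 ^ (n / 3)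
  else if n % 3 = 1 then 4 * 3 ^ ((n - 4) / 3)
  else 16 * 3 ^ ((n - 8) / 3)

noncomputable def f2 (n : ℕ) : ℕ :=
  if n = 4 then 3
  else if n = 5 then 4
  else if n = 6 then 6
  else if n = 9 then 20
  else if n % 3 = 1 then 11 * 3 ^ ((n - 7) / 3)
  else if n % 3 = 2 then 15 * 3 ^ ((n - 8) / 3)
  else 64 * 3 ^ ((n - 12) / 3)

def pA {k : ℕ} (f : Fin k → Fin 3) : Option (Fin k × Fin 3) → Bool
  | none => false
  | some (i, j) => j != f i + 1

def setA {k : ℕ} (f : Fin k → Fin 3) : Finset (Option (Fin k × Fin 3)) :=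
  Finset.univ.filter (fun v => pA f v = true)

def pB {k : ℕ} (o : Option (Fin k)) : Option (Fin k × Fin 3) → Bool
  | none => true
  | some (i, j) => if o = some i then j == 1 else j != 1

def setB {k : ℕ} (o : Option (Fin k)) : Finset (Option (Fin k × Fin 3)) :=
  Finset.univ.filter (fun v => pB o v = true)

@[simp] lemma mem_setA_some {k : ℕ} (f : Fin k → Fin 3) (i : Fin k) (j : Fin 3) :
    some (i,j) ∈ setA f ↔ j ≠ f i + 1 := by
  rw [setA, Finset.mem_filter]; simp [pA]

@[simp] lemma not_mem_setA_none {k : ℕ} (f : Fin k → Fin 3) :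
    (none : Option (Fin k × Fin 3)) ∉ setA f := by
  rw [setA, Finset.mem_filter]; simp [pA]

@[simp] lemma mem_setB_none {k : ℕ} (o : Option (Fin k)) :
    (none : Option (Fin k × Fin 3)) ∈ setB o := by
  rw [setB, Finset.mem_filter]; simp [pB]

@[simp] lemma mem_setB_some {k : ℕ} (o : Option (Fin k)) (i : Fin k) (j : Fin 3) :
    some (i,j) ∈ setB o ↔ (if o = some i then j = 1 else j ≠ 1) := by
  by_cases h : o = some i <;> rw [setB, Finset.mem_filter] <;> simp [pB, h]

lemma tstar_adj {k : ℕ} (x y : Option (Fin k × Fin 3)) :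
    (TstarTree k).Adj x y ↔
      (∃ i, x = some (i,1) ∧ (y = some (i,0) ∨ y = some (i,2) ∨ y = none)) ∨
      (∃ i, y = some (i,1) ∧ (x = some (i,0) ∨ x = some (i,2) ∨ x = none)) := by
  simp only [TstarTree, SimpleGraph.fromRel_adj]
  constructor
  · rintro ⟨hne, (⟨i,h1,h2⟩|⟨i,h1,h2⟩)|(⟨i,h1,h2⟩|⟨i,h1,h2⟩)⟩
    · exact Or.inl ⟨i, h1, h2.imp id Or.inl⟩
    · exact Or.inr ⟨i, h2, Or.inr (Or.inr h1)⟩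
    · exact Or.inr ⟨i, h1, h2.imp id Or.inl⟩
    · exact Or.inl ⟨i, h2, Or.inr (Or.inr h1)⟩
  · rintro (⟨i,h1,(h2|h2|h2)⟩|⟨i,h1,(h2|h2|h2)⟩) <;> subst h1 <;> subst h2
    · exact ⟨by simp, Or.inl (Or.inl ⟨i, rfl, Or.inl rfl⟩)⟩
    · exact ⟨by simp, Or.inl (Or.inl ⟨i, rfl, Or.inr rfl⟩)⟩
    · exact ⟨by simp, Or.inr (Or.inr ⟨i, rfl, rfl⟩)⟩
    · exact ⟨by simp, Or.inr (Or.inl ⟨i, rfl, Or.inl rfl⟩)⟩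
    · exact ⟨by simp, Or.inr (Or.inl ⟨i, rfl, Or.inr rfl⟩)⟩
    · exact ⟨by simp, Or.inl (Or.inr ⟨i, rfl, rfl⟩)⟩

lemma adj_hub {k : ℕ} (v : Option (Fin k × Fin 3)) :
    (TstarTree k).Adj none v ↔ ∃ i, v = some (i, 1) := by
  rw [tstar_adj]; simp

lemma adj_mid {k : ℕ} (i : Fin k) (v : Option (Fin k × Fin 3)) :
    (TstarTree k).Adj (some (i,1)) v ↔ v = none ∨ v = some (i,0) ∨ v = some (i,2) := by
  rw [tstar_adj]
  constructor
  · rintro (⟨i',h1,h2⟩|⟨i',h1,(h2|h2|h2)⟩)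
    · simp only [Option.some.injEq, Prod.mk.injEq] at h1
      obtain ⟨rfl, -⟩ := h1
      tauto
    · simp at h2
    · simp at h2
    · simp at h2
  · rintro (rfl|rfl|rfl)
    · exact Or.inl ⟨i, rfl, Or.inr (Or.inr rfl)⟩
    · exact Or.inl ⟨i, rfl, Or.inl rfl⟩
    · exact Or.inl ⟨i, rfl, Or.inr (Or.inl rfl)⟩

lemma adj_leaf {k : ℕ} (i : Fin k) (j : Fin 3) (hj : j ≠ 1) (v : Option (Fin k × Fin 3)) :
    (TstarTree k).Adj (some (i,j)) v ↔ v = some (i,1) := by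
  rw [tstar_adj]
  constructor
  · rintro (⟨i',h1,h2⟩|⟨i',h1,(h2|h2|h2)⟩)
    · simp only [Option.some.injEq, Prod.mk.injEq] at h1; exact absurd h1.2 hj
    · simp only [Option.some.injEq, Prod.mk.injEq] at h2; rw [← h2.1] at h1; exact h1
    · simp only [Option.some.injEq, Prod.mk.injEq] at h2; rw [← h2.1] at h1; exact h1
    · simp at h2
  · rintro rfl
    fin_cases j
    · exact Or.inr ⟨i, rfl, Or.inl rfl⟩
    · exact absurd rfl hj
    · exact Or.inr ⟨i, rfl, Or.inr (Or.inl rfl)⟩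

lemma dissoc_mono {V : Type*} {G : SimpleGraph V} {S T : Finset V}
    (h : G.IsDissocSet T) (hst : S ⊆ T) : G.IsDissocSet S :=
  fun a ha b hb c hc hab hac => h a (hst ha) b (hst hb) c (hst hc) hab hac

lemma maxdissoc_iff_insert {V : Type*} [DecidableEq V] {G : SimpleGraph V} {S : Finset V} :
    G.IsMaxDissocSet S ↔
      G.IsDissocSet S ∧ ∀ v ∉ S, ¬ G.IsDissocSet (insert v S) := by
  constructor
  · rintro ⟨hd, hm⟩
    refine ⟨hd, fun v hv hins => ?_⟩
    have := hm _ hins (Finset.subset_insert v S)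
    exact hv (this ▸ Finset.mem_insert_self v S)
  · rintro ⟨hd, hm⟩
    refine ⟨hd, fun T hT hST => ?_⟩
    refine Finset.Subset.antisymm hST (fun v hv => ?_)
    by_contra hvS
    exact hm v hvS (dissoc_mono hT (Finset.insert_subset hv hST))

lemma insert_dissoc {V : Type*} [DecidableEq V] {G : SimpleGraph V} {S : Finset V} {v : V}
    (hd : G.IsDissocSet S) (h1 : ∀ b ∈ S, ¬ G.Adj v b) :
    G.IsDissocSet (insert v S) := by
  intro a ha b hb c hc hab hac
  rcases Finset.mem_insert.1 ha with ha' | ha'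
  · rcases Finset.mem_insert.1 hb with hb' | hb'
    · rw [ha', hb'] at hab; exact absurd hab (G.loopless.irrefl v)
    · rw [ha'] at hab; exact absurd hab (h1 b hb')
  · rcases Finset.mem_insert.1 hb with hb' | hb'
    · rw [hb'] at hab; exact absurd hab.symm (h1 a ha')
    · rcases Finset.mem_insert.1 hc with hc' | hc'
      · rw [hc'] at hac; exact absurd hac.symm (h1 a ha')
      · exact hd a ha' b hb' c hc' hab hac

lemma insert_dissoc2 {V : Type*} [DecidableEq V] {G : SimpleGraph V} {S : Finset V} {v w : V}
    (hd : G.IsDissocSet S) (huniq : ∀ b, G.Adj v b → b = w)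
    (hw : ∀ c ∈ S, ¬ G.Adj w c) :
    G.IsDissocSet (insert v S) := by
  intro a ha b hb c hc hab hac
  rcases Finset.mem_insert.1 ha with ha' | ha'
  · rw [ha'] at hab hac
    rw [huniq b hab, huniq c hac]
  · rcases Finset.mem_insert.1 hb with hb' | hb'
    · rcases Finset.mem_insert.1 hc with hc' | hc'
      · rw [hb', hc']
      · rw [hb'] at hab
        have haw : a = w := huniq a hab.symm
        rw [haw] at hac
        exact absurd hac (hw c hc')
    · rcases Finset.mem_insert.1 hc with hc' | hc'
      · rw [hc'] at hac
        have haw : a = w := huniq a hac.symm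
        rw [haw] at hab
        exact absurd hab (hw b hb')
      · exact hd a ha' b hb' c hc' hab hac

lemma fin3 (x : Fin 3) : x = 0 ∨ x = 1 ∨ x = 2 := by revert x; decide

lemma dissoc_setA {k : ℕ} (f : Fin k → Fin 3) : (TstarTree k).IsDissocSet (setA f) := by
  intro a ha b hb c hc hab hac
  rcases a with _ | ⟨i, j⟩
  · exact absurd ha (not_mem_setA_none f)
  · rcases fin3 j with rfl | rfl | rfl
    · rw [adj_leaf i 0 (by decide)] at hab hac; rw [hab, hac]
    · rw [mem_setA_some] at ha
      rw [adj_mid] at hab hac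
      rcases fin3 (f i) with h | h | h
      · rw [h] at ha; exact absurd (by decide) ha
      · rcases hab with h1 | h1 | h1
        · rw [h1] at hb; exact absurd hb (not_mem_setA_none f)
        · rcases hac with h2 | h2 | h2
          · rw [h2] at hc; exact absurd hc (not_mem_setA_none f)
          · rw [h1, h2]
          · rw [h2, mem_setA_some, h] at hc; exact absurd (by decide) hc
        · rw [h1, mem_setA_some, h] at hb; exact absurd (by decide) hb
      · rcases hab with h1 | h1 | h1
        · rw [h1] at hb; exact absurd hb (not_mem_setA_none f)
        · rw [h1, mem_setA_some, h] at hb; exact absurd (by decide) hb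
        · rcases hac with h2 | h2 | h2
          · rw [h2] at hc; exact absurd hc (not_mem_setA_none f)
          · rw [h2, mem_setA_some, h] at hc; exact absurd (by decide) hc
          · rw [h1, h2]
    · rw [adj_leaf i 2 (by decide)] at hab hac; rw [hab, hac]

lemma dissoc_setB {k : ℕ} (o : Option (Fin k)) : (TstarTree k).IsDissocSet (setB o) := by
  intro a ha b hb c hc hab hac
  rcases a with _ | ⟨i, j⟩
  · obtain ⟨ib, hb'⟩ := (adj_hub b).1 hab
    obtain ⟨ic, hc'⟩ := (adj_hub c).1 hac
    rw [hb'] at hb ⊢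
    rw [hc'] at hc ⊢
    rw [mem_setB_some] at hb hc
    rcases o with _ | i0
    · rw [if_neg (by simp)] at hb; exact absurd rfl hb
    · have hbi : ib = i0 := by
        by_cases h : (some i0 : Option (Fin k)) = some ib
        · exact (Option.some.injEq _ _ ▸ h).symm
        · rw [if_neg h] at hb; exact absurd rfl hb
      have hci : ic = i0 := by
        by_cases h : (some i0 : Option (Fin k)) = some ic
        · exact (Option.some.injEq _ _ ▸ h).symm
        · rw [if_neg h] at hc; exact absurd rfl hc
      rw [hbi, hci]
  · rcases fin3 j with rfl | rfl | rfl
    · rw [adj_leaf i 0 (by decide)] at hab hac; rw [hab, hac]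
    · rw [mem_setB_some] at ha
      have ho : o = some i := by
        by_contra h; rw [if_neg h] at ha; exact ha rfl
      subst ho
      rw [adj_mid] at hab hac
      rcases hab with h1 | h1 | h1
      · rcases hac with h2 | h2 | h2
        · rw [h1, h2]
        · rw [h2, mem_setB_some, if_pos rfl] at hc; exact absurd hc (by decide)
        · rw [h2, mem_setB_some, if_pos rfl] at hc; exact absurd hc (by decide)
      · rw [h1, mem_setB_some, if_pos rfl] at hb; exact absurd hb (by decide)
      · rw [h1, mem_setB_some, if_pos rfl] at hb; exact absurd hb (by decide)
    · rw [adj_leaf i 2 (by decide)] at hab hac; rw [hab, hac]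

lemma maximal_setA {k : ℕ} (f : Fin k → Fin 3) (hf : f ≠ fun _ => 0) :
    (TstarTree k).IsMaxDissocSet (setA f) := by
  rw [maxdissoc_iff_insert]
  refine ⟨dissoc_setA f, ?_⟩
  intro v hv hins
  rcases v with _ | ⟨i, j⟩
  · obtain ⟨i, hi⟩ : ∃ i, f i ≠ 0 := by
      by_contra h; push_neg at h; exact hf (funext h)
    rcases fin3 (f i) with h | h | h
    · exact absurd h hi
    · have hm' : some (i,1) ∈ insert none (setA f) :=
        Finset.mem_insert_of_mem (by rw [mem_setA_some, h]; decide)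
      have hl : some (i,0) ∈ insert none (setA f) :=
        Finset.mem_insert_of_mem (by rw [mem_setA_some, h]; decide)
      have hn : (none : Option (Fin k × Fin 3)) ∈ insert none (setA f) :=
        Finset.mem_insert_self _ _
      have := hins _ hm' _ hn _ hl ((adj_mid i none).2 (Or.inl rfl))
        ((adj_mid i _).2 (Or.inr (Or.inl rfl)))
      simp at this
    · have hm' : some (i,1) ∈ insert none (setA f) :=
        Finset.mem_insert_of_mem (by rw [mem_setA_some, h]; decide)
      have hl : some (i,2) ∈ insert none (setA f) :=
        Finset.mem_insert_of_mem (by rw [mem_setA_some, h]; decide)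
      have hn : (none : Option (Fin k × Fin 3)) ∈ insert none (setA f) :=
        Finset.mem_insert_self _ _
      have := hins _ hm' _ hn _ hl ((adj_mid i none).2 (Or.inl rfl))
        ((adj_mid i _).2 (Or.inr (Or.inr rfl)))
      simp at this
  · rw [mem_setA_some] at hv
    push_neg at hv
    rcases fin3 (f i) with h | h | h
    · have e : j = 1 := by rw [hv, h]; decide
      subst e
      have ha : some (i,1) ∈ insert (some (i,1)) (setA f) := Finset.mem_insert_self _ _
      have hb : some (i,0) ∈ insert (some (i,1)) (setA f) :=
        Finset.mem_insert_of_mem (by rw [mem_setA_some, h]; decide)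
      have hc : some (i,2) ∈ insert (some (i,1)) (setA f) :=
        Finset.mem_insert_of_mem (by rw [mem_setA_some, h]; decide)
      have := hins _ ha _ hb _ hc ((adj_mid i _).2 (Or.inr (Or.inl rfl)))
        ((adj_mid i _).2 (Or.inr (Or.inr rfl)))
      simp at this
    · have e : j = 2 := by rw [hv, h]; decide
      subst e
      have ha : some (i,1) ∈ insert (some (i,2)) (setA f) :=
        Finset.mem_insert_of_mem (by rw [mem_setA_some, h]; decide)
      have hb : some (i,0) ∈ insert (some (i,2)) (setA f) :=
        Finset.mem_insert_of_mem (by rw [mem_setA_some, h]; decide)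
      have hc : some (i,2) ∈ insert (some (i,2)) (setA f) := Finset.mem_insert_self _ _
      have := hins _ ha _ hb _ hc ((adj_mid i _).2 (Or.inr (Or.inl rfl)))
        ((adj_mid i _).2 (Or.inr (Or.inr rfl)))
      simp at this
    · have e : j = 0 := by rw [hv, h]; decide
      subst e
      have ha : some (i,1) ∈ insert (some (i,0)) (setA f) :=
        Finset.mem_insert_of_mem (by rw [mem_setA_some, h]; decide)
      have hb : some (i,2) ∈ insert (some (i,0)) (setA f) :=
        Finset.mem_insert_of_mem (by rw [mem_setA_some, h]; decide)
      have hc : some (i,0) ∈ insert (some (i,0)) (setA f) := Finset.mem_insert_self _ _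
      have := hins _ ha _ hb _ hc ((adj_mid i _).2 (Or.inr (Or.inr rfl)))
        ((adj_mid i _).2 (Or.inr (Or.inl rfl)))
      simp at this

lemma maximal_setB {k : ℕ} (o : Option (Fin k)) :
    (TstarTree k).IsMaxDissocSet (setB o) := by
  rw [maxdissoc_iff_insert]
  refine ⟨dissoc_setB o, ?_⟩
  intro v hv hins
  rcases v with _ | ⟨i, j⟩
  · exact hv (mem_setB_none o)
  · rw [mem_setB_some] at hv
    rcases o with _ | i0
    · rw [if_neg (by simp)] at hv
      push_neg at hv
      subst hv
      have ha : some (i,1) ∈ insert (some (i,1)) (setB (none : Option (Fin k))) :=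
        Finset.mem_insert_self _ _
      have hb : some (i,0) ∈ insert (some (i,1)) (setB (none : Option (Fin k))) :=
        Finset.mem_insert_of_mem (by rw [mem_setB_some, if_neg (by simp)]; decide)
      have hc : some (i,2) ∈ insert (some (i,1)) (setB (none : Option (Fin k))) :=
        Finset.mem_insert_of_mem (by rw [mem_setB_some, if_neg (by simp)]; decide)
      have := hins _ ha _ hb _ hc ((adj_mid i _).2 (Or.inr (Or.inl rfl)))
        ((adj_mid i _).2 (Or.inr (Or.inr rfl)))
      simp at this
    · by_cases hii : i = i0
      · subst hii
        rw [if_pos rfl] at hv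
        have ha : some (i,1) ∈ insert (some (i,j)) (setB (some i)) :=
          Finset.mem_insert_of_mem (by rw [mem_setB_some, if_pos rfl])
        have hb : (none : Option (Fin k × Fin 3)) ∈ insert (some (i,j)) (setB (some i)) :=
          Finset.mem_insert_of_mem (mem_setB_none _)
        have hc : some (i,j) ∈ insert (some (i,j)) (setB (some i)) := Finset.mem_insert_self _ _
        have hadj : (TstarTree k).Adj (some (i,1)) (some (i,j)) := by
          rcases fin3 j with rfl | rfl | rfl
          · exact (adj_mid i _).2 (Or.inr (Or.inl rfl))
          · exact absurd rfl hv
          · exact (adj_mid i _).2 (Or.inr (Or.inr rfl))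
        have := hins _ ha _ hb _ hc ((adj_mid i _).2 (Or.inl rfl)) hadj
        simp at this
      · rw [if_neg (fun h : (some i0 : Option (Fin k)) = some i =>
          hii (Option.some_injective _ h).symm)] at hv
        push_neg at hv
        subst hv
        have ha : (none : Option (Fin k × Fin 3)) ∈ insert (some (i,1)) (setB (some i0)) :=
          Finset.mem_insert_of_mem (mem_setB_none _)
        have hb : some (i0,1) ∈ insert (some (i,1)) (setB (some i0)) :=
          Finset.mem_insert_of_mem (by rw [mem_setB_some, if_pos rfl])
        have hc : some (i,1) ∈ insert (some (i,1)) (setB (some i0)) := Finset.mem_insert_self _ _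
        have := hins _ ha _ hb _ hc ((adj_hub _).2 ⟨i0, rfl⟩) ((adj_hub _).2 ⟨i, rfl⟩)
        simp only [Option.some.injEq, Prod.mk.injEq] at this
        exact hii this.1.symm

lemma classify {k : ℕ} {S : Finset (Option (Fin k × Fin 3))}
    (h : (TstarTree k).IsMaxDissocSet S) :
    (∃ f : Fin k → Fin 3, f ≠ (fun _ => 0) ∧ S = setA f) ∨ (∃ o, S = setB o) := by
  classical
  obtain ⟨hd, hm⟩ := maxdissoc_iff_insert.1 h
  -- F1: a middle cannot have both its leaves in S
  have F1 : ∀ i : Fin k, some (i,1) ∈ S → ¬(some (i,0) ∈ S ∧ some (i,2) ∈ S) := by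
    rintro i hmi ⟨h0, h2⟩
    have := hd _ hmi _ h0 _ h2 ((adj_mid i _).2 (Or.inr (Or.inl rfl)))
      ((adj_mid i _).2 (Or.inr (Or.inr rfl)))
    simp at this
  -- F2: if a middle is absent, both its leaves are present
  have F2 : ∀ (i : Fin k) (j : Fin 3), j ≠ 1 → some (i,1) ∉ S → some (i,j) ∈ S := by
    intro i j hj hmi
    by_contra hv
    refine hm _ hv (insert_dissoc hd ?_)
    intro b hb hadj
    rw [adj_leaf i j hj] at hadj
    rw [hadj] at hb
    exact hmi hb
  by_cases hnone : (none : Option (Fin k × Fin 3)) ∈ S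
  · right
    have honem : ∀ i i' : Fin k, some (i,1) ∈ S → some (i',1) ∈ S → i = i' := by
      intro i i' hi hi'
      have := hd none hnone _ hi _ hi' ((adj_hub _).2 ⟨i, rfl⟩) ((adj_hub _).2 ⟨i', rfl⟩)
      simpa using this
    by_cases hex : ∃ i, some (i,1) ∈ S
    · obtain ⟨i0, hi0⟩ := hex
      refine ⟨some i0, ?_⟩
      ext v
      rcases v with _ | ⟨i, j⟩
      · simp [hnone]
      · rw [mem_setB_some]
        by_cases hii : i = i0
        · subst hii
          rw [if_pos rfl]
          constructor
          · intro hv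
            by_contra hj1
            have hadj2 : (TstarTree k).Adj (some (i,1)) (some (i,j)) := by
              rcases fin3 j with rfl | rfl | rfl
              · exact (adj_mid i _).2 (Or.inr (Or.inl rfl))
              · exact absurd rfl hj1
              · exact (adj_mid i _).2 (Or.inr (Or.inr rfl))
            have := hd _ hi0 _ hnone _ hv ((adj_mid i _).2 (Or.inl rfl)) hadj2
            simp at this
          · rintro rfl; exact hi0
        · rw [if_neg (fun h : (some i0 : Option (Fin k)) = some i =>
            hii (Option.some_injective _ h).symm)]
          constructor
          · rintro hv rfl
            exact hii (honem i i0 hv hi0)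
          · intro hj1
            exact F2 i j hj1 (fun hmi => hii (honem i i0 hmi hi0))
    · push_neg at hex
      refine ⟨none, ?_⟩
      ext v
      rcases v with _ | ⟨i, j⟩
      · simp [hnone]
      · rw [mem_setB_some, if_neg (by simp)]
        constructor
        · rintro hv rfl
          exact hex i hv
        · intro hj1
          exact F2 i j hj1 (hex i)
  · left
    -- F3: if a middle is present, one of its leaves is present
    have F3 : ∀ i : Fin k, some (i,1) ∈ S → (some (i,0) ∈ S ∨ some (i,2) ∈ S) := by
      intro i hmi
      by_contra hno
      push_neg at hno
      refine hm (some (i,0)) hno.1 (insert_dissoc2 hd (w := some (i,1)) ?_ ?_)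
      · intro b hadj
        rw [adj_leaf i 0 (by decide)] at hadj
        exact hadj
      · intro c hc hadj
        rw [adj_mid] at hadj
        rcases hadj with h' | h' | h'
        · rw [h'] at hc; exact hnone hc
        · rw [h'] at hc; exact hno.1 hc
        · rw [h'] at hc; exact hno.2 hc
    set f : Fin k → Fin 3 := fun i =>
      if some (i,0) ∈ S ∧ some (i,2) ∈ S then 0 else if some (i,0) ∈ S then 1 else 2
      with hfdef
    have hfne : f ≠ fun _ => 0 := by
      intro hf0
      have hnomid : ∀ i : Fin k, some (i,1) ∉ S := by
        intro i hmi
        have hfi0 : f i = 0 := congrFun hf0 i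
        have hboth : some (i,0) ∈ S ∧ some (i,2) ∈ S := by
          by_contra hb
          rw [hfdef] at hfi0
          simp only [if_neg hb] at hfi0
          by_cases h0 : some (i,0) ∈ S
          · rw [if_pos h0] at hfi0; exact absurd hfi0 (by decide)
          · rw [if_neg h0] at hfi0; exact absurd hfi0 (by decide)
        exact F1 i hmi hboth
      refine hm none hnone (insert_dissoc hd ?_)
      intro b hb hadj
      rw [adj_hub] at hadj
      obtain ⟨i, rfl⟩ := hadj
      exact hnomid i hb
    refine ⟨f, hfne, ?_⟩
    ext v
    rcases v with _ | ⟨i, j⟩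
    · simp [hnone]
    · rw [mem_setA_some]
      by_cases hmi : some (i,1) ∈ S
      · have h1 := F1 i hmi
        rcases F3 i hmi with h0 | h2
        · have h2' : some (i,2) ∉ S := fun hh => h1 ⟨h0, hh⟩
          have hfi : f i = 1 := by
            rw [hfdef]; simp only
            rw [if_neg (fun hh => h2' hh.2), if_pos h0]
          rw [hfi]
          rcases fin3 j with rfl | rfl | rfl
          · exact iff_of_true h0 (by decide)
          · exact iff_of_true hmi (by decide)
          · exact iff_of_false h2' (by decide)
        · have h0' : some (i,0) ∉ S := fun hh => h1 ⟨hh, h2⟩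
          have hfi : f i = 2 := by
            rw [hfdef]; simp only
            rw [if_neg (fun hh => h0' hh.1), if_neg h0']
          rw [hfi]
          rcases fin3 j with rfl | rfl | rfl
          · exact iff_of_false h0' (by decide)
          · exact iff_of_true hmi (by decide)
          · exact iff_of_true h2 (by decide)
      · have h0 := F2 i 0 (by decide) hmi
        have h2 := F2 i 2 (by decide) hmi
        have hfi : f i = 0 := by
          rw [hfdef]; simp only
          rw [if_pos ⟨h0, h2⟩]
        rw [hfi]
        rcases fin3 j with rfl | rfl | rfl
        · exact iff_of_true h0 (by decide)
        · exact iff_of_false hmi (by decide)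
        · exact iff_of_true h2 (by decide)

lemma setA_inj {k : ℕ} : Function.Injective (setA (k := k)) := by
  intro f g h
  funext i
  have h2 := Finset.ext_iff.1 h (some (i, g i + 1))
  rw [mem_setA_some, mem_setA_some] at h2
  have h3 : g i + 1 = f i + 1 := by
    by_contra hne
    exact (h2.1 hne) rfl
  exact (add_right_cancel h3).symm

lemma setB_key {k : ℕ} (i : Fin k) (oo : Option (Fin k)) :
    some (i,1) ∈ setB oo ↔ oo = some i := by
  rw [mem_setB_some]
  by_cases hh : oo = some i
  · rw [if_pos hh]; simp [hh]
  · rw [if_neg hh]; simp [hh]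

lemma setB_inj {k : ℕ} : Function.Injective (setB (k := k)) := by
  intro o o' h
  rcases o with _ | i0 <;> rcases o' with _ | i1
  · rfl
  · have h1 := (setB_key i1 (some i1)).2 rfl
    rw [← h] at h1
    exact absurd ((setB_key i1 none).1 h1) (by simp)
  · have h1 := (setB_key i0 (some i0)).2 rfl
    rw [h] at h1
    exact absurd ((setB_key i0 none).1 h1) (by simp)
  · have h1 := (setB_key i1 (some i1)).2 rfl
    rw [← h] at h1
    exact ((setB_key i1 (some i0)).1 h1)

lemma phi_tstar (k : ℕ) : (TstarTree k).phi = 3 ^ k + k := by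
  classical
  have hset : {S : Finset (Option (Fin k × Fin 3)) | (TstarTree k).IsMaxDissocSet S} =
      ↑(((Finset.univ.filter (fun f : Fin k → Fin 3 => f ≠ fun _ => 0)).image setA) ∪
        (Finset.univ.image setB)) := by
    ext S
    simp only [Set.mem_setOf_eq, Finset.coe_union, Set.mem_union, Finset.mem_coe,
      Finset.mem_image, Finset.mem_filter, Finset.mem_univ, true_and]
    constructor
    · intro h
      rcases classify h with ⟨f, hf, rfl⟩ | ⟨o, rfl⟩
      · exact Or.inl ⟨f, hf, rfl⟩
      · exact Or.inr ⟨o, rfl⟩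
    · rintro (⟨f, hf, rfl⟩ | ⟨o, rfl⟩)
      · exact maximal_setA f hf
      · exact maximal_setB o
  have hdisj : Disjoint
      ((Finset.univ.filter (fun f : Fin k → Fin 3 => f ≠ fun _ => 0)).image setA)
      (Finset.univ.image (setB (k := k))) := by
    rw [Finset.disjoint_left]
    rintro S hS1 hS2
    rw [Finset.mem_image] at hS1 hS2
    obtain ⟨f, _, rfl⟩ := hS1
    obtain ⟨o, _, ho⟩ := hS2
    have := mem_setB_none o
    rw [ho] at this
    exact not_mem_setA_none f this
  have hcard1 : (Finset.univ.filter (fun f : Fin k → Fin 3 => f ≠ fun _ => 0)).card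
      = 3 ^ k - 1 := by
    have he : (Finset.univ.filter (fun f : Fin k → Fin 3 => f ≠ fun _ => 0)) =
        Finset.univ.erase (fun _ => 0) := by
      ext g
      simp [Finset.mem_erase, and_comm]
    rw [he, Finset.card_erase_of_mem (Finset.mem_univ _), Finset.card_univ]
    simp [Fintype.card_fun]
  rw [SimpleGraph.phi, hset, Set.ncard_coe_finset,
    Finset.card_union_of_disjoint hdisj,
    Finset.card_image_of_injective _ setA_inj,
    Finset.card_image_of_injective _ setB_inj,
    hcard1, Finset.card_univ, Fintype.card_option, Fintype.card_fin]
  have h1 : 1 ≤ 3 ^ k := Nat.one_le_pow k 3 (by norm_num)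
  omega


/-- for `n ≥ 4` with `n ≡ 1 [MOD 3]`,
`Φ(T*ₙ) = 3^((n-1)/3) + (n-1)/3`. -/
theorem phi_TstarTree (n : ℕ) (hn : 4 ≤ n) (hmod : n % 3 = 1) :
    (TstarTree ((n - 1) / 3)).phi = 3 ^ ((n - 1) / 3) + (n - 1) / 3 := by
  exact phi_tstar _
end

section
/- Let T be a tree and k ≥ 2 an integer. Let x be a support vertex of T of degree k+1 that is adjacent to k leaves u_1, …, u_k and to a non-leaf vertex t, and suppose t is adjacent to a leaf y. Let T' be the tree obtained from T by deleting the edge xt and adding the new edge xy. If the number of vertices of T outside {u_1, …, u_k, x, y} is at least 3 (equivalently, the order of T is at least k + 5), then Φ(T) < Φ(T'). -/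
section AuxLemmas
namespace SimpleGraph
variable {V : Type*}

lemma IsDissocSet.mono {G : SimpleGraph V} {A B : Finset V}
    (h : G.IsDissocSet B) (hAB : A ⊆ B) : G.IsDissocSet A :=
  fun a ha b hb c hc hab hac => h a (hAB ha) b (hAB hb) c (hAB hc) hab hac

lemma dissoc_singleton (G : SimpleGraph V) (a : V) : G.IsDissocSet {a} := by
  intro p hp q hq r hr hpq _
  simp only [Finset.mem_singleton] at hp hq
  rw [hp, hq] at hpq; exact absurd hpq (G.loopless.irrefl _)

lemma dissoc_pair [DecidableEq V] (G : SimpleGraph V) (a b : V) : G.IsDissocSet {a, b} := by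
  intro p hp q hq r hr hpq hpr
  simp only [Finset.mem_insert, Finset.mem_singleton] at hp hq hr
  rcases hq with hq | hq <;> rcases hr with hr | hr <;> (try (rw [hq, hr])) <;>
    rcases hp with hp | hp <;> rw [hp] at hpq hpr <;>
    first
      | (rw [hq] at hpq; exact absurd hpq (G.loopless.irrefl _))
      | (rw [hr] at hpr; exact absurd hpr (G.loopless.irrefl _))

lemma dissoc_union {G : SimpleGraph V} {A B : Finset V} [DecidableEq V]
    (hA : G.IsDissocSet A) (hB : G.IsDissocSet B)
    (hAB : ∀ a ∈ A, ∀ b ∈ B, ¬G.Adj a b) : G.IsDissocSet (A ∪ B) := by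
  intro p hp q hq r hr hpq hpr
  rcases Finset.mem_union.mp hp with hp | hp
  · have hq' : q ∈ A := by
      rcases Finset.mem_union.mp hq with h | h
      · exact h
      · exact absurd hpq (hAB p hp q h)
    have hr' : r ∈ A := by
      rcases Finset.mem_union.mp hr with h | h
      · exact h
      · exact absurd hpr (hAB p hp r h)
    exact hA p hp q hq' r hr' hpq hpr
  · have hq' : q ∈ B := by
      rcases Finset.mem_union.mp hq with h | h
      · exact absurd hpq.symm (hAB q h p hp)
      · exact h
    have hr' : r ∈ B := by
      rcases Finset.mem_union.mp hr with h | h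
      · exact absurd hpr.symm (hAB r h p hp)
      · exact h
    exact hB p hp q hq' r hr' hpq hpr

lemma not_dissoc_witness {G : SimpleGraph V} {A : Finset V} {a b c : V}
    (ha : a ∈ A) (hb : b ∈ A) (hc : c ∈ A) (h1 : G.Adj a b) (h2 : G.Adj a c)
    (hbc : b ≠ c) : ¬G.IsDissocSet A :=
  fun h => hbc (h a ha b hb c hc h1 h2)

lemma dissoc_congr {G H : SimpleGraph V} {A : Finset V}
    (h : ∀ a ∈ A, ∀ b ∈ A, (G.Adj a b ↔ H.Adj a b)) :
    G.IsDissocSet A ↔ H.IsDissocSet A := by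
  constructor <;> intro hd a ha b hb c hc h1 h2
  · exact hd a ha b hb c hc ((h a ha b hb).mpr h1) ((h a ha c hc).mpr h2)
  · exact hd a ha b hb c hc ((h a ha b hb).mp h1) ((h a ha c hc).mp h2)

lemma isMaxDissocSet_iff {G : SimpleGraph V} {S : Finset V} [DecidableEq V] :
    G.IsMaxDissocSet S ↔ G.IsDissocSet S ∧ ∀ v ∉ S, ¬G.IsDissocSet (insert v S) := by
  constructor
  · intro h
    refine ⟨h.1, fun v hv hd => hv ?_⟩
    have := h.2 (insert v S) hd (Finset.subset_insert _ _)
    rw [this]; exact Finset.mem_insert_self _ _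
  · intro h
    refine ⟨h.1, fun B hB hSB => ?_⟩
    by_contra hne
    have hss : S ⊂ B := ssubset_iff_subset_ne.mpr ⟨hSB, hne⟩
    obtain ⟨v, hvB, hvS⟩ := Finset.exists_of_ssubset hss
    exact h.2 v hvS (hB.mono (Finset.insert_subset hvB hSB))

lemma dissoc_insert_of_isolated {G : SimpleGraph V} {S : Finset V} {v : V} [DecidableEq V]
    (hS : G.IsDissocSet S) (hv : ∀ b ∈ S, ¬G.Adj v b) :
    G.IsDissocSet (insert v S) := by
  rw [Finset.insert_eq]
  refine dissoc_union (G.dissoc_singleton v) hS ?_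
  intro a ha b hb
  rw [Finset.mem_singleton] at ha; subst ha; exact hv b hb

lemma dissoc_insert_pendant {G : SimpleGraph V} {S : Finset V} {v w : V} [DecidableEq V]
    (hS : G.IsDissocSet S) (hvw : ∀ b ∈ S, G.Adj v b → b = w)
    (hw : ∀ b ∈ S, ¬G.Adj w b) : G.IsDissocSet (insert v S) := by
  intro p hp q hq r hr hpq hpr
  rcases Finset.mem_insert.mp hp with hpv | hpS
  · rw [hpv] at hpq hpr
    have hq' : q = w := by
      rcases Finset.mem_insert.mp hq with hqv | hqS
      · rw [hqv] at hpq; exact absurd hpq (G.loopless.irrefl _)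
      · exact hvw q hqS hpq
    have hr' : r = w := by
      rcases Finset.mem_insert.mp hr with hrv | hrS
      · rw [hrv] at hpr; exact absurd hpr (G.loopless.irrefl _)
      · exact hvw r hrS hpr
    rw [hq', hr']
  · rcases Finset.mem_insert.mp hq with hqv | hqS
    · rcases Finset.mem_insert.mp hr with hrv | hrS
      · rw [hqv, hrv]
      · rw [hqv] at hpq
        have hpw : p = w := hvw p hpS hpq.symm
        rw [hpw] at hpr
        exact absurd hpr (hw r hrS)
    · rcases Finset.mem_insert.mp hr with hrv | hrS
      · rw [hrv] at hpr
        have hpw : p = w := hvw p hpS hpr.symm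
        rw [hpw] at hpq
        exact absurd hpq (hw q hqS)
      · exact hS p hpS q hqS r hrS hpq hpr

lemma exists_max_dissoc_ext [Fintype V] [DecidableEq V] (G : SimpleGraph V) {A D : Finset V}
    (hDA : D ⊆ A) (hDd : G.IsDissocSet D) :
    ∃ E : Finset V, D ⊆ E ∧ E ⊆ A ∧ G.IsDissocSet E ∧
      ∀ w ∈ A, w ∉ E → ¬G.IsDissocSet (insert w E) := by
  classical
  have hne : ((Finset.univ : Finset (Finset V)).filter
      fun E => E ⊆ A ∧ G.IsDissocSet E ∧ D ⊆ E).Nonempty :=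
    ⟨D, by simp [hDA, hDd]⟩
  obtain ⟨E, hmem, hmax⟩ := Finset.exists_max_image _ Finset.card hne
  rw [Finset.mem_filter] at hmem
  obtain ⟨-, hEA, hEd, hDE⟩ := hmem
  refine ⟨E, hDE, hEA, hEd, fun w hwA hwE hd => ?_⟩
  have hmem2 : insert w E ∈ ((Finset.univ : Finset (Finset V)).filter
      fun E => E ⊆ A ∧ G.IsDissocSet E ∧ D ⊆ E) := by
    rw [Finset.mem_filter]
    exact ⟨Finset.mem_univ _, Finset.insert_subset hwA hEA, hd,
      hDE.trans (Finset.subset_insert _ _)⟩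
  have := hmax _ hmem2
  rw [Finset.card_insert_of_notMem hwE] at this
  omega

end SimpleGraph

lemma Finset.insert_split2 {V : Type*} [DecidableEq V] {a b w : V} {S : Finset V}
    (ha : a ∈ S) (hb : b ∈ S) :
    insert w S = {a, b} ∪ insert w (S \ {a, b}) := by
  ext v
  simp only [Finset.mem_insert, Finset.mem_union, Finset.mem_sdiff, Finset.mem_singleton]
  constructor
  · rintro (rfl | hv)
    · exact Or.inr (Or.inl rfl)
    · by_cases h1 : v = a
      · exact Or.inl (Or.inl h1)
      · by_cases h2 : v = b
        · exact Or.inl (Or.inr h2)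
        · exact Or.inr (Or.inr ⟨hv, fun h => h.elim h1 h2⟩)
  · rintro ((rfl | rfl) | (rfl | ⟨hv, -⟩))
    · exact Or.inr ha
    · exact Or.inr hb
    · exact Or.inl rfl
    · exact Or.inr hv

lemma Finset.insert_split3 {V : Type*} [DecidableEq V] {a b c w : V} {S : Finset V}
    (ha : a ∈ S) (hb : b ∈ S) (hc : c ∈ S) :
    insert w S = {a, b, c} ∪ insert w (S \ {a, b, c}) := by
  ext v
  simp only [Finset.mem_insert, Finset.mem_union, Finset.mem_sdiff, Finset.mem_singleton]
  constructor
  · rintro (rfl | hv)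
    · exact Or.inr (Or.inl rfl)
    · by_cases h1 : v = a
      · exact Or.inl (Or.inl h1)
      · by_cases h2 : v = b
        · exact Or.inl (Or.inr (Or.inl h2))
        · by_cases h3 : v = c
          · exact Or.inl (Or.inr (Or.inr h3))
          · exact Or.inr (Or.inr ⟨hv, fun h => h.elim h1 (fun h' => h'.elim h2 h3)⟩)
  · rintro ((rfl | rfl | rfl) | (rfl | ⟨hv, -⟩))
    · exact Or.inr ha
    · exact Or.inr hb
    · exact Or.inr hc
    · exact Or.inl rfl
    · exact Or.inr hv

lemma Finset.pair_union_eq {V : Type*} [DecidableEq V] (a b : V) (Z : Finset V) :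
    ({a, b} : Finset V) ∪ Z = insert a (insert b Z) := by
  ext v; simp [or_assoc]

end AuxLemmas

/-- Lemma 2, strict form: if at least 3 vertices lie outside
`{u_1, …, u_k, x, y}`, then rewiring the edge `xt` to `xy` strictly increases
the number of maximal dissociation sets. -/
theorem phi_lt_of_rewire {V : Type*} [Fintype V] [DecidableEq V]
    (T : SimpleGraph V) [DecidableRel T.Adj] (hT : T.IsTree)
    (k : ℕ) (hk : 2 ≤ k) (x t y : V) (u : Fin k → V)
    (hinj : Function.Injective u)
    (hadj : ∀ i, T.Adj x (u i)) (hleaf : ∀ i, T.degree (u i) = 1)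
    (hxt : T.Adj x t) (ht : T.degree t ≠ 1) (hdx : T.degree x = k + 1)
    (hty : T.Adj t y) (hy : T.degree y = 1)
    (hbig : 3 ≤ ((({x, y} ∪ Set.range u)ᶜ : Set V)).ncard) :
    T.phi < (T.deleteEdges {s(x, t)} ⊔ SimpleGraph.edge x y).phi := by
  classical
  set G' := T.deleteEdges {s(x, t)} ⊔ SimpleGraph.edge x y with hG'def
  -- distinct indices
  obtain ⟨i0, i1, hi01⟩ : ∃ i0 i1 : Fin k, u i0 ≠ u i1 := by
    refine ⟨⟨0, by omega⟩, ⟨1, by omega⟩, fun h => ?_⟩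
    have h2 := hinj h
    rw [Fin.mk.injEq] at h2
    exact absurd h2 (by omega)
  -- basic distinctness
  have hxt_ne : x ≠ t := hxt.ne
  have hyt_ne : y ≠ t := hty.ne'
  have hux : ∀ i, u i ≠ x := fun i => (hadj i).ne'
  have hut : ∀ i, u i ≠ t := fun i h => ht (h ▸ hleaf i)
  have hxy_ne : x ≠ y := by
    intro h
    rw [h, hy] at hdx
    omega
  -- neighborhoods in T
  have hNy : ∀ w, T.Adj y w ↔ w = t := by
    intro w
    have h1 : ({t} : Finset V) ⊆ T.neighborFinset y := by
      simp [SimpleGraph.mem_neighborFinset, hty.symm]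
    have h2 : ({t} : Finset V) = T.neighborFinset y :=
      Finset.eq_of_subset_of_card_le h1
        (by rw [T.card_neighborFinset_eq_degree, hy]; simp)
    rw [← SimpleGraph.mem_neighborFinset, ← h2, Finset.mem_singleton]
  have hNu : ∀ i w, T.Adj (u i) w ↔ w = x := by
    intro i w
    have h1 : ({x} : Finset V) ⊆ T.neighborFinset (u i) := by
      simp [SimpleGraph.mem_neighborFinset, (hadj i).symm]
    have h2 : ({x} : Finset V) = T.neighborFinset (u i) :=
      Finset.eq_of_subset_of_card_le h1
        (by rw [T.card_neighborFinset_eq_degree, hleaf i]; simp)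
    rw [← SimpleGraph.mem_neighborFinset, ← h2, Finset.mem_singleton]
  have huy : ∀ i, u i ≠ y := by
    intro i h
    have hadj' : T.Adj y x := by rw [← h]; exact (hadj i).symm
    exact hxt_ne.symm ((hNy x).mp hadj').symm
  have hNx : ∀ w, T.Adj x w ↔ (w = t ∨ ∃ i, w = u i) := by
    intro w
    have h1 : insert t (Finset.image u Finset.univ) ⊆ T.neighborFinset x := by
      intro v hv
      rw [SimpleGraph.mem_neighborFinset]
      rcases Finset.mem_insert.mp hv with h | h
      · rw [h]; exact hxt
      · obtain ⟨i, -, rfl⟩ := Finset.mem_image.mp h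
        exact hadj i
    have hcard : (insert t (Finset.image u Finset.univ)).card = k + 1 := by
      rw [Finset.card_insert_of_notMem, Finset.card_image_of_injective _ hinj]
      · simp
      · intro h
        obtain ⟨i, -, hi⟩ := Finset.mem_image.mp h
        exact hut i hi
    have h2 : insert t (Finset.image u Finset.univ) = T.neighborFinset x :=
      Finset.eq_of_subset_of_card_le h1
        (by rw [T.card_neighborFinset_eq_degree, hdx, hcard])
    rw [← SimpleGraph.mem_neighborFinset, ← h2]
    simp only [Finset.mem_insert, Finset.mem_image, Finset.mem_univ, true_and]
    constructor
    · rintro (h | ⟨i, hi⟩)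
      · exact Or.inl h
      · exact Or.inr ⟨i, hi.symm⟩
    · rintro (h | ⟨i, hi⟩)
      · exact Or.inl h
      · exact Or.inr ⟨i, hi.symm⟩
  -- adjacency in G'
  have hG'adj : ∀ a b, G'.Adj a b ↔
      ((T.Adj a b ∧ ¬(a = x ∧ b = t) ∧ ¬(a = t ∧ b = x)) ∨
        ((a = x ∧ b = y) ∨ (a = y ∧ b = x))) := by
    intro a b
    rw [hG'def, SimpleGraph.sup_adj, SimpleGraph.deleteEdges_adj, SimpleGraph.edge_adj,
      Set.mem_singleton_iff, Sym2.eq_iff]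
    constructor
    · rintro (⟨hab, hne⟩ | ⟨h, -⟩)
      · exact Or.inl ⟨hab, fun h => hne (Or.inl h), fun h => hne (Or.inr h)⟩
      · exact Or.inr h
    · rintro (⟨hab, h1, h2⟩ | h)
      · exact Or.inl ⟨hab, fun hh => hh.elim h1 h2⟩
      · refine Or.inr ⟨h, ?_⟩
        rcases h with ⟨h1, h2⟩ | ⟨h1, h2⟩
        · rw [h1, h2]; exact hxy_ne
        · rw [h1, h2]; exact hxy_ne.symm
  have hG'x : ∀ w, G'.Adj x w ↔ ((∃ i, w = u i) ∨ w = y) := by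
    intro w
    rw [hG'adj]
    constructor
    · rintro (⟨hadj', h1, -⟩ | ⟨⟨-, h⟩ | ⟨h, -⟩⟩)
      · rcases (hNx w).mp hadj' with rfl | h
        · exact absurd ⟨rfl, rfl⟩ h1
        · exact Or.inl h
      · exact Or.inr h
      · exact absurd h hxy_ne
    · rintro (⟨i, rfl⟩ | rfl)
      · exact Or.inl ⟨hadj i, fun h => hut i h.2, fun h => hxt_ne h.1⟩
      · exact Or.inr (Or.inl ⟨rfl, rfl⟩)
  have hG'u : ∀ i w, G'.Adj (u i) w ↔ w = x := by
    intro i w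
    rw [hG'adj]
    constructor
    · rintro (⟨hadj', -, -⟩ | ⟨⟨h, -⟩ | ⟨h, -⟩⟩)
      · exact (hNu i w).mp hadj'
      · exact absurd h (hux i)
      · exact absurd h (huy i)
    · rintro rfl
      exact Or.inl ⟨(hadj i).symm, fun h => hux i h.1, fun h => hut i h.1⟩
  have hG'y : ∀ w, G'.Adj y w ↔ (w = t ∨ w = x) := by
    intro w
    rw [hG'adj]
    constructor
    · rintro (⟨hadj', -, -⟩ | ⟨⟨h, -⟩ | ⟨-, h⟩⟩)
      · exact Or.inl ((hNy w).mp hadj')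
      · exact absurd h hxy_ne.symm
      · exact Or.inr h
    · rintro (rfl | rfl)
      · exact Or.inl ⟨hty.symm, fun h => hxy_ne h.1.symm, fun h => hyt_ne h.1⟩
      · exact Or.inr (Or.inr ⟨rfl, rfl⟩)
  have hG'nox : ∀ a b, a ≠ x → b ≠ x → (G'.Adj a b ↔ T.Adj a b) := by
    intro a b ha hb
    rw [hG'adj]
    constructor
    · rintro (⟨h, -, -⟩ | ⟨⟨h, -⟩ | ⟨-, h⟩⟩)
      · exact h
      · exact absurd h ha
      · exact absurd h hb
    · intro h
      exact Or.inl ⟨h, fun hh => ha hh.1, fun hh => hb hh.2⟩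
  -- the outside set
  set WA : Finset V := Finset.univ.filter (fun v => v ≠ x ∧ v ≠ y ∧ ∀ i, v ≠ u i) with hWAdef
  have hWA : ∀ v, v ∈ WA ↔ (v ≠ x ∧ v ≠ y ∧ ∀ i, v ≠ u i) := by
    intro v; simp [hWAdef]
  have htWA : t ∈ WA :=
    (hWA t).mpr ⟨fun h => hxt_ne h.symm, fun h => hyt_ne h.symm, fun i h => hut i h.symm⟩
  have h3 : ∀ z₁ z₂ : V, ∃ w ∈ WA, w ≠ z₁ ∧ w ≠ z₂ := by
    intro z₁ z₂
    by_contra hcon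
    push_neg at hcon
    have hsub : (({x, y} ∪ Set.range u)ᶜ : Set V) ⊆ {z₁, z₂} := by
      intro v hv
      simp only [Set.mem_compl_iff, Set.mem_union, Set.mem_insert_iff,
        Set.mem_singleton_iff, Set.mem_range] at hv
      push_neg at hv
      have hvWA : v ∈ WA := (hWA v).mpr ⟨hv.1.1, hv.1.2, fun i h => hv.2 i h.symm⟩
      rw [Set.mem_insert_iff, Set.mem_singleton_iff]
      by_cases h : v = z₁
      · exact Or.inl h
      · exact Or.inr (hcon v hvWA h)
    have hle := Set.ncard_le_ncard hsub (Set.toFinite _)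
    have h2 : ({z₁, z₂} : Set V).ncard ≤ 2 := by
      calc ({z₁, z₂} : Set V).ncard ≤ ({z₂} : Set V).ncard + 1 := Set.ncard_insert_le _ _
        _ = 2 := by rw [Set.ncard_singleton]
    omega

  -- maximality in insert form
  have hmaxT : ∀ {S : Finset V}, T.IsMaxDissocSet S → ∀ v ∉ S, ¬T.IsDissocSet (insert v S) :=
    fun hS => (SimpleGraph.isMaxDissocSet_iff.mp hS).2
  have hS_A : ∀ S, T.IsMaxDissocSet S → x ∉ S → ∀ i, u i ∈ S := by
    intro S hS hx i
    by_contra hui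
    refine hmaxT hS (u i) hui (SimpleGraph.dissoc_insert_of_isolated hS.1 ?_)
    intro b hb hab
    exact hx (((hNu i b).mp hab) ▸ hb)
  have hS_y : ∀ S, T.IsMaxDissocSet S → t ∉ S → y ∈ S := by
    intro S hS ht'
    by_contra hyS
    refine hmaxT hS y hyS (SimpleGraph.dissoc_insert_of_isolated hS.1 ?_)
    intro b hb hab
    exact ht' (((hNy b).mp hab) ▸ hb)
  have hS_j : ∀ S, T.IsMaxDissocSet S → x ∈ S → t ∉ S → ∃ j, u j ∈ S := by
    intro S hS hx ht'
    by_contra hcon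
    push_neg at hcon
    refine hmaxT hS (u i0) (hcon i0) ?_
    refine SimpleGraph.dissoc_insert_pendant hS.1 (fun b hb hab => (hNu i0 b).mp hab) ?_
    intro b hb hab
    rcases (hNx b).mp hab with hbt | ⟨i, hbi⟩
    · rw [hbt] at hb; exact ht' hb
    · rw [hbi] at hb; exact hcon i hb
  have hS_t : ∀ S, T.IsDissocSet S → x ∈ S → t ∈ S →
      ((∀ i, u i ∉ S) ∧ y ∉ S ∧ ∀ v ∈ S, v ≠ x → v ≠ t → (v ∈ WA ∧ ¬T.Adj t v)) := by
    intro S hS hx htS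
    have hu' : ∀ i, u i ∉ S := by
      intro i hi
      exact hut i (hS x hx t htS (u i) hi hxt (hadj i)).symm
    have hy' : y ∉ S := by
      intro hyS
      exact hxy_ne (hS t htS x hx y hyS hxt.symm hty)
    refine ⟨hu', hy', fun v hv hvx hvt => ⟨?_, ?_⟩⟩
    · exact (hWA v).mpr ⟨hvx, fun h => hy' (h ▸ hv), fun i h => hu' i (h ▸ hv)⟩
    · intro hadj'
      exact hvx (hS t htS x hx v hv hxt.symm hadj').symm
  have hS_jW : ∀ S, T.IsDissocSet S → x ∈ S → t ∉ S → ∀ j, u j ∈ S →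
      ∀ v ∈ S, v ≠ x → v ≠ u j → v ≠ y → (v ∈ WA ∧ v ≠ t) := by
    intro S hS hx htS j hj v hv hvx hvuj hvy
    have hvt : v ≠ t := fun h => htS (h ▸ hv)
    refine ⟨(hWA v).mpr ⟨hvx, hvy, fun i hvi => ?_⟩, hvt⟩
    have hui : u i ∈ S := hvi ▸ hv
    have heq := hS x hx (u i) hui (u j) hj (hadj i) (hadj j)
    exact hvuj (hvi.trans heq)
  have hP2max : ∀ S, T.IsMaxDissocSet S → x ∈ S → t ∈ S →
      ∀ w, w ∈ WA → ¬T.Adj t w → w ∉ S → ¬T.IsDissocSet (insert w (S \ {x, t})) := by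
    intro S hS hx htS w hwWA hwt hwS hd
    obtain ⟨hwx, hwy, hwu⟩ := (hWA w).mp hwWA
    obtain ⟨hu', hy', hrest⟩ := hS_t S hS.1 hx htS
    refine hmaxT hS w hwS ?_
    rw [Finset.insert_split2 hx htS]
    refine SimpleGraph.dissoc_union (SimpleGraph.dissoc_pair T x t) hd ?_
    intro a ha b hb hab
    have hbmem : b = w ∨ b ∈ S \ {x, t} := Finset.mem_insert.mp hb
    rcases Finset.mem_insert.mp ha with hax | ha
    · rw [hax] at hab
      rcases (hNx b).mp hab with hbt | ⟨i, hbi⟩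
      · rcases hbmem with h | h
        · exact hwS (by rw [h.symm.trans hbt]; exact htS)
        · rw [hbt] at h
          exact (Finset.mem_sdiff.mp h).2
            (Finset.mem_insert_of_mem (Finset.mem_singleton_self t))
      · rcases hbmem with h | h
        · exact hwu i (h.symm.trans hbi)
        · rw [hbi] at h
          exact hu' i (Finset.mem_sdiff.mp h).1
    · rw [Finset.mem_singleton] at ha
      rw [ha] at hab
      rcases hbmem with h | h
      · rw [h] at hab
        exact hwt hab
      · have hbS := Finset.mem_sdiff.mp h
        have hbx : b ≠ x := fun hh => hbS.2 (by rw [hh]; exact Finset.mem_insert_self x {t})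
        have hbt : b ≠ t := fun hh =>
          hbS.2 (by rw [hh]; exact Finset.mem_insert_of_mem (Finset.mem_singleton_self t))
        exact (hrest b hbS.1 hbx hbt).2 hab
  have hP1max : ∀ S, T.IsMaxDissocSet S → x ∈ S → t ∉ S → ∀ j, u j ∈ S → y ∈ S →
      ∀ w, w ∈ WA → w ≠ t → w ∉ S → ¬T.IsDissocSet (insert w (S \ {x, u j, y})) := by
    intro S hS hx htS j hj hyS w hwWA hwt hwS hd
    obtain ⟨hwx, hwy, hwu⟩ := (hWA w).mp hwWA
    refine hmaxT hS w hwS ?_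
    rw [Finset.insert_split3 hx hj hyS]
    have htriple : T.IsDissocSet ({x, u j, y} : Finset V) := by
      have heq : ({x, u j, y} : Finset V) = {x, u j} ∪ {y} := by
        ext v; simp [or_assoc]
      rw [heq]
      refine SimpleGraph.dissoc_union (SimpleGraph.dissoc_pair T x (u j))
        (T.dissoc_singleton y) ?_
      intro a ha b hb hab
      rw [Finset.mem_singleton] at hb
      rw [hb] at hab
      rcases Finset.mem_insert.mp ha with hax | ha
      · rw [hax] at hab
        rcases (hNx y).mp hab with h | ⟨i, h⟩
        · exact hyt_ne h
        · exact huy i h.symm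
      · rw [Finset.mem_singleton] at ha; rw [ha] at hab
        exact hxy_ne.symm ((hNu j y).mp hab)
    refine SimpleGraph.dissoc_union htriple hd ?_
    intro a ha b hb hab
    have hbmem : b = w ∨ b ∈ S \ {x, u j, y} := Finset.mem_insert.mp hb
    rcases Finset.mem_insert.mp ha with hax | ha
    · rw [hax] at hab
      rcases (hNx b).mp hab with hbt | ⟨i, hbi⟩
      · rcases hbmem with h | h
        · exact hwt (h.symm.trans hbt)
        · rw [hbt] at h
          exact htS (Finset.mem_sdiff.mp h).1
      · rcases hbmem with h | h
        · exact hwu i (h.symm.trans hbi)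
        · rw [hbi] at h
          have hm := Finset.mem_sdiff.mp h
          have hij : u i = u j := hS.1 x hx (u i) hm.1 (u j) hj (hadj i) (hadj j)
          exact hm.2 (by
            rw [hij]
            exact Finset.mem_insert_of_mem (Finset.mem_insert_self _ _))
    · rcases Finset.mem_insert.mp ha with hau | ha
      · rw [hau] at hab
        have hbx := (hNu j b).mp hab
        rcases hbmem with h | h
        · exact hwx (h.symm.trans hbx)
        · rw [hbx] at h
          exact (Finset.mem_sdiff.mp h).2 (Finset.mem_insert_self _ _)
      · rw [Finset.mem_singleton] at ha; rw [ha] at hab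
        have hbt := (hNy b).mp hab
        rcases hbmem with h | h
        · exact hwt (h.symm.trans hbt)
        · rw [hbt] at h
          exact htS (Finset.mem_sdiff.mp h).1
  -- dissociation transfer on W-subsets
  have hdisG'W : ∀ X : Finset V, (∀ v ∈ X, v ∈ WA) →
      (G'.IsDissocSet X ↔ T.IsDissocSet X) := by
    intro X hX
    refine SimpleGraph.dissoc_congr ?_
    intro a ha b hb
    exact hG'nox a b ((hWA a).mp (hX a ha)).1 ((hWA b).mp (hX b hb)).1
  have hEdis : ∀ (j : Fin k) (X : Finset V), (∀ v ∈ X, v ∈ WA) → T.IsDissocSet X →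
      G'.IsDissocSet (insert x (insert (u j) X)) := by
    intro j X hXW hXd
    rw [← Finset.pair_union_eq]
    refine SimpleGraph.dissoc_union (SimpleGraph.dissoc_pair G' x (u j))
      ((hdisG'W X hXW).mpr hXd) ?_
    intro a ha b hb hab
    obtain ⟨hbx, hby, hbu⟩ := (hWA b).mp (hXW b hb)
    rcases Finset.mem_insert.mp ha with hax | ha
    · rw [hax] at hab
      rcases (hG'x b).mp hab with ⟨i, h⟩ | h
      · exact hbu i h
      · exact hby h
    · rw [Finset.mem_singleton] at ha; rw [ha] at hab
      exact hbx ((hG'u j b).mp hab)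
  have hM45 : ∀ (j : Fin k) (X : Finset V), (∀ v ∈ X, v ∈ WA) → T.IsDissocSet X →
      (∀ w ∈ WA, w ∉ X → ¬T.IsDissocSet (insert w X)) →
      G'.IsMaxDissocSet (insert x (insert (u j) X)) := by
    intro j X hXW hXd hXmax
    rw [SimpleGraph.isMaxDissocSet_iff]
    refine ⟨hEdis j X hXW hXd, fun v hv hd => ?_⟩
    have hxE : x ∈ insert x (insert (u j) X) := Finset.mem_insert_self _ _
    have hujE : u j ∈ insert x (insert (u j) X) :=
      Finset.mem_insert_of_mem (Finset.mem_insert_self _ _)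
    by_cases hvy : v = y
    · rw [hvy] at hd
      exact SimpleGraph.not_dissoc_witness (Finset.mem_insert_of_mem hxE)
        (Finset.mem_insert_self _ _) (Finset.mem_insert_of_mem hujE)
        ((hG'x y).mpr (Or.inr rfl)) ((hG'x (u j)).mpr (Or.inl ⟨j, rfl⟩))
        (fun h => huy j h.symm) hd
    by_cases hvu : ∃ i, v = u i
    · obtain ⟨i, rfl⟩ := hvu
      exact SimpleGraph.not_dissoc_witness (Finset.mem_insert_of_mem hxE)
        (Finset.mem_insert_self _ _) (Finset.mem_insert_of_mem hujE)
        ((hG'x (u i)).mpr (Or.inl ⟨i, rfl⟩)) ((hG'x (u j)).mpr (Or.inl ⟨j, rfl⟩))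
        (fun h => hv (h ▸ hujE)) hd
    · have hvx : v ≠ x := fun h => hv (h ▸ hxE)
      have hvWA : v ∈ WA := (hWA v).mpr ⟨hvx, hvy, fun i h => hvu ⟨i, h⟩⟩
      have hvX : v ∉ X := fun h =>
        hv (Finset.mem_insert_of_mem (Finset.mem_insert_of_mem h))
      refine hXmax v hvWA hvX ?_
      have hsub : insert v X ⊆ insert v (insert x (insert (u j) X)) :=
        Finset.insert_subset_insert _ ((Finset.subset_insert _ _).trans
          (Finset.subset_insert _ _))
      refine (hdisG'W (insert v X) ?_).mp (hd.mono hsub)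
      intro w hw
      rcases Finset.mem_insert.mp hw with rfl | hw
      · exact hvWA
      · exact hXW w hw
  have hM2 : ∀ X : Finset V, (∀ v ∈ X, v ∈ WA ∧ v ≠ t) → T.IsDissocSet X →
      (∀ w ∈ WA, w ≠ t → w ∉ X → ¬T.IsDissocSet (insert w X)) →
      G'.IsMaxDissocSet (insert x (insert y X)) := by
    intro X hXP hXd hXmax
    have hXW : ∀ v ∈ X, v ∈ WA := fun v hv => (hXP v hv).1
    have hEd : G'.IsDissocSet (insert x (insert y X)) := by
      rw [← Finset.pair_union_eq]
      refine SimpleGraph.dissoc_union (SimpleGraph.dissoc_pair G' x y)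
        ((hdisG'W X hXW).mpr hXd) ?_
      intro a ha b hb hab
      obtain ⟨hbx, hby, hbu⟩ := (hWA b).mp (hXW b hb)
      rcases Finset.mem_insert.mp ha with hax | ha
      · rw [hax] at hab
        rcases (hG'x b).mp hab with ⟨i, h⟩ | h
        · exact hbu i h
        · exact hby h
      · rw [Finset.mem_singleton] at ha; rw [ha] at hab
        rcases (hG'y b).mp hab with h | h
        · exact (hXP b hb).2 h
        · exact hbx h
    rw [SimpleGraph.isMaxDissocSet_iff]
    refine ⟨hEd, fun v hv hd => ?_⟩
    have hxE : x ∈ insert x (insert y X) := Finset.mem_insert_self _ _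
    have hyE : y ∈ insert x (insert y X) :=
      Finset.mem_insert_of_mem (Finset.mem_insert_self _ _)
    by_cases hvt : v = t
    · rw [hvt] at hd
      exact SimpleGraph.not_dissoc_witness (Finset.mem_insert_of_mem hyE)
        (Finset.mem_insert_self _ _) (Finset.mem_insert_of_mem hxE)
        ((hG'y t).mpr (Or.inl rfl)) ((hG'y x).mpr (Or.inr rfl))
        (fun h => hxt_ne h.symm) hd
    by_cases hvu : ∃ i, v = u i
    · obtain ⟨i, rfl⟩ := hvu
      exact SimpleGraph.not_dissoc_witness (Finset.mem_insert_of_mem hxE)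
        (Finset.mem_insert_self _ _) (Finset.mem_insert_of_mem hyE)
        ((hG'x (u i)).mpr (Or.inl ⟨i, rfl⟩)) ((hG'x y).mpr (Or.inr rfl))
        (fun h => huy i h) hd
    · have hvx : v ≠ x := fun h => hv (h ▸ hxE)
      have hvy : v ≠ y := fun h => hv (h ▸ hyE)
      have hvWA : v ∈ WA := (hWA v).mpr ⟨hvx, hvy, fun i h => hvu ⟨i, h⟩⟩
      have hvX : v ∉ X := fun h =>
        hv (Finset.mem_insert_of_mem (Finset.mem_insert_of_mem h))
      refine hXmax v hvWA hvt hvX ?_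
      have hsub : insert v X ⊆ insert v (insert x (insert y X)) :=
        Finset.insert_subset_insert _ ((Finset.subset_insert _ _).trans
          (Finset.subset_insert _ _))
      refine (hdisG'W (insert v X) ?_).mp (hd.mono hsub)
      intro w hw
      rcases Finset.mem_insert.mp hw with rfl | hw
      · exact hvWA
      · exact hXW w hw
  have hM3a : ∀ (j : Fin k) (X : Finset V), (∀ v ∈ X, v ∈ WA ∧ v ≠ t) →
      (∀ w ∈ WA, w ≠ t → w ∉ X → ¬T.IsDissocSet (insert w X)) →
      G'.IsDissocSet (insert t (insert x (insert (u j) X))) →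
      G'.IsMaxDissocSet (insert t (insert x (insert (u j) X))) := by
    intro j X hXP hXmax hEd
    have hXW : ∀ v ∈ X, v ∈ WA := fun v hv => (hXP v hv).1
    rw [SimpleGraph.isMaxDissocSet_iff]
    refine ⟨hEd, fun v hv hd => ?_⟩
    have htE : t ∈ insert t (insert x (insert (u j) X)) := Finset.mem_insert_self _ _
    have hxE : x ∈ insert t (insert x (insert (u j) X)) :=
      Finset.mem_insert_of_mem (Finset.mem_insert_self _ _)
    have hujE : u j ∈ insert t (insert x (insert (u j) X)) :=
      Finset.mem_insert_of_mem (Finset.mem_insert_of_mem (Finset.mem_insert_self _ _))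
    by_cases hvy : v = y
    · rw [hvy] at hd
      exact SimpleGraph.not_dissoc_witness (Finset.mem_insert_self _ _)
        (Finset.mem_insert_of_mem htE) (Finset.mem_insert_of_mem hxE)
        ((hG'y t).mpr (Or.inl rfl)) ((hG'y x).mpr (Or.inr rfl))
        (fun h => hxt_ne h.symm) hd
    by_cases hvu : ∃ i, v = u i
    · obtain ⟨i, rfl⟩ := hvu
      exact SimpleGraph.not_dissoc_witness (Finset.mem_insert_of_mem hxE)
        (Finset.mem_insert_self _ _) (Finset.mem_insert_of_mem hujE)
        ((hG'x (u i)).mpr (Or.inl ⟨i, rfl⟩)) ((hG'x (u j)).mpr (Or.inl ⟨j, rfl⟩))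
        (fun h => hv (h ▸ hujE)) hd
    · have hvx : v ≠ x := fun h => hv (h ▸ hxE)
      have hvt : v ≠ t := fun h => hv (h ▸ htE)
      have hvWA : v ∈ WA := (hWA v).mpr ⟨hvx, hvy, fun i h => hvu ⟨i, h⟩⟩
      have hvX : v ∉ X := fun h => hv (Finset.mem_insert_of_mem
        (Finset.mem_insert_of_mem (Finset.mem_insert_of_mem h)))
      refine hXmax v hvWA hvt hvX ?_
      have hsub : insert v X ⊆ insert v (insert t (insert x (insert (u j) X))) :=
        Finset.insert_subset_insert _ ((Finset.subset_insert _ _).trans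
          ((Finset.subset_insert _ _).trans (Finset.subset_insert _ _)))
      refine (hdisG'W (insert v X) ?_).mp (hd.mono hsub)
      intro w hw
      rcases Finset.mem_insert.mp hw with rfl | hw
      · exact hvWA
      · exact hXW w hw
  have hM3b : ∀ (j : Fin k) (X : Finset V), (∀ v ∈ X, v ∈ WA ∧ v ≠ t) → T.IsDissocSet X →
      (∀ w ∈ WA, w ≠ t → w ∉ X → ¬T.IsDissocSet (insert w X)) →
      ¬G'.IsDissocSet (insert t (insert x (insert (u j) X))) →
      G'.IsMaxDissocSet (insert x (insert (u j) X)) := by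
    intro j X hXP hXd hXmax hnd
    have hXW : ∀ v ∈ X, v ∈ WA := fun v hv => (hXP v hv).1
    rw [SimpleGraph.isMaxDissocSet_iff]
    refine ⟨hEdis j X hXW hXd, fun v hv hd => ?_⟩
    have hxE : x ∈ insert x (insert (u j) X) := Finset.mem_insert_self _ _
    have hujE : u j ∈ insert x (insert (u j) X) :=
      Finset.mem_insert_of_mem (Finset.mem_insert_self _ _)
    by_cases hvt : v = t
    · rw [hvt] at hd; exact hnd hd
    by_cases hvy : v = y
    · rw [hvy] at hd
      exact SimpleGraph.not_dissoc_witness (Finset.mem_insert_of_mem hxE)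
        (Finset.mem_insert_self _ _) (Finset.mem_insert_of_mem hujE)
        ((hG'x y).mpr (Or.inr rfl)) ((hG'x (u j)).mpr (Or.inl ⟨j, rfl⟩))
        (fun h => huy j h.symm) hd
    by_cases hvu : ∃ i, v = u i
    · obtain ⟨i, rfl⟩ := hvu
      exact SimpleGraph.not_dissoc_witness (Finset.mem_insert_of_mem hxE)
        (Finset.mem_insert_self _ _) (Finset.mem_insert_of_mem hujE)
        ((hG'x (u i)).mpr (Or.inl ⟨i, rfl⟩)) ((hG'x (u j)).mpr (Or.inl ⟨j, rfl⟩))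
        (fun h => hv (h ▸ hujE)) hd
    · have hvx : v ≠ x := fun h => hv (h ▸ hxE)
      have hvWA : v ∈ WA := (hWA v).mpr ⟨hvx, hvy, fun i h => hvu ⟨i, h⟩⟩
      have hvX : v ∉ X := fun h =>
        hv (Finset.mem_insert_of_mem (Finset.mem_insert_of_mem h))
      refine hXmax v hvWA hvt hvX ?_
      have hsub : insert v X ⊆ insert v (insert x (insert (u j) X)) :=
        Finset.insert_subset_insert _ ((Finset.subset_insert _ _).trans
          (Finset.subset_insert _ _))
      refine (hdisG'W (insert v X) ?_).mp (hd.mono hsub)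
      intro w hw
      rcases Finset.mem_insert.mp hw with rfl | hw
      · exact hvWA
      · exact hXW w hw
  have hM1 : ∀ S, T.IsMaxDissocSet S → x ∉ S → G'.IsMaxDissocSet S := by
    intro S hS hx
    have hUS := hS_A S hS hx
    have hcongr : ∀ v ∈ S, v ≠ x := fun v hv h => hx (h ▸ hv)
    rw [SimpleGraph.isMaxDissocSet_iff]
    constructor
    · refine (SimpleGraph.dissoc_congr ?_).mpr hS.1
      intro a ha b hb
      exact hG'nox a b (hcongr a ha) (hcongr b hb)
    · intro v hv hd
      by_cases hvx : v = x
      · rw [hvx] at hd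
        exact SimpleGraph.not_dissoc_witness (Finset.mem_insert_self _ _)
          (Finset.mem_insert_of_mem (hUS i0)) (Finset.mem_insert_of_mem (hUS i1))
          ((hG'x (u i0)).mpr (Or.inl ⟨i0, rfl⟩)) ((hG'x (u i1)).mpr (Or.inl ⟨i1, rfl⟩))
          hi01 hd
      · refine hmaxT hS v hv ?_
        refine (SimpleGraph.dissoc_congr ?_).mp hd
        intro a ha b hb
        have hax : a ≠ x := by
          rcases Finset.mem_insert.mp ha with rfl | ha
          · exact hvx
          · exact hcongr a ha
        have hbx : b ≠ x := by
          rcases Finset.mem_insert.mp hb with rfl | hb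
          · exact hvx
          · exact hcongr b hb
        exact hG'nox a b hax hbx

  -- witness: a maximal dissociation set of T₂ avoiding t
  have hNW : ∀ z, T.Adj t z → z ≠ x → z ≠ y → z ∈ WA := by
    intro z hz hzx hzy
    refine (hWA z).mpr ⟨hzx, hzy, fun i h => ?_⟩
    rw [h] at hz
    exact hxt_ne ((hNu i t).mp hz.symm).symm
  have hwitD : ∃ D : Finset V, (∀ v ∈ D, v ∈ WA) ∧ T.IsDissocSet D ∧
      ∀ E : Finset V, D ⊆ E → T.IsDissocSet E → t ∉ E := by
    by_cases h2 : ∃ z₁ z₂, (T.Adj t z₁ ∧ z₁ ≠ x ∧ z₁ ≠ y) ∧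
        (T.Adj t z₂ ∧ z₂ ≠ x ∧ z₂ ≠ y) ∧ z₁ ≠ z₂
    · obtain ⟨z₁, z₂, ⟨h1a, h1x, h1y⟩, ⟨h2a, h2x, h2y⟩, hne⟩ := h2
      refine ⟨{z₁, z₂}, ?_, SimpleGraph.dissoc_pair T z₁ z₂, ?_⟩
      · intro v hv
        rcases Finset.mem_insert.mp hv with h | h
        · rw [h]; exact hNW z₁ h1a h1x h1y
        · rw [Finset.mem_singleton] at h; rw [h]; exact hNW z₂ h2a h2x h2y
      · intro E hDE hEd htE
        exact hne (hEd t htE z₁ (hDE (Finset.mem_insert_self _ _)) z₂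
          (hDE (Finset.mem_insert_of_mem (Finset.mem_singleton_self _))) h1a h2a)
    · by_cases h1 : ∃ z, T.Adj t z ∧ z ≠ x ∧ z ≠ y
      · obtain ⟨z, hza, hzx, hzy⟩ := h1
        have huniq : ∀ z', T.Adj t z' → z' ≠ x → z' ≠ y → z' = z := by
          intro z' ha hx' hy'
          by_contra hne
          exact h2 ⟨z', z, ⟨ha, hx', hy'⟩, ⟨hza, hzx, hzy⟩, hne⟩
        have hzt : z ≠ t := hza.ne'
        have hzWA : z ∈ WA := hNW z hza hzx hzy
        by_cases hw : ∃ w₀, T.Adj z w₀ ∧ w₀ ≠ t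
        · obtain ⟨w₀, hw0a, hw0t⟩ := hw
          have hw0x : w₀ ≠ x := by
            intro h
            rw [h] at hw0a
            rcases (hNx z).mp hw0a.symm with h' | ⟨i, h'⟩
            · exact hzt h'
            · exact ((hWA z).mp hzWA).2.2 i h'
          have hw0y : w₀ ≠ y := by
            intro h
            rw [h] at hw0a
            exact hzt ((hNy z).mp hw0a.symm)
          have hw0u : ∀ i, w₀ ≠ u i := by
            intro i h
            rw [h] at hw0a
            exact hzx ((hNu i z).mp hw0a.symm)
          refine ⟨{z, w₀}, ?_, SimpleGraph.dissoc_pair T z w₀, ?_⟩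
          · intro v hv
            rcases Finset.mem_insert.mp hv with h | h
            · rw [h]; exact hzWA
            · rw [Finset.mem_singleton] at h; rw [h]
              exact (hWA w₀).mpr ⟨hw0x, hw0y, hw0u⟩
          · intro E hDE hEd htE
            exact hw0t (hEd z (hDE (Finset.mem_insert_self _ _)) w₀
              (hDE (Finset.mem_insert_of_mem (Finset.mem_singleton_self _)))
              t htE hw0a hza.symm)
        · push_neg at hw
          obtain ⟨w, hwWA, hwt, hwz⟩ := h3 t z
          exfalso
          obtain ⟨p⟩ := hT.isConnected.preconnected w x
          have hwS : w ∈ {v : V | v ∈ WA ∧ v ≠ t ∧ v ≠ z} := ⟨hwWA, hwt, hwz⟩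
          have hxS : x ∉ {v : V | v ∈ WA ∧ v ≠ t ∧ v ≠ z} := by
            intro h
            exact ((hWA x).mp h.1).1 rfl
          obtain ⟨d, -, hfst, hsnd⟩ := p.exists_boundary_dart _ hwS hxS
          obtain ⟨hfWA, hft, hfz⟩ := hfst
          have hdadj := d.adj
          by_cases hqx : d.toProd.2 = x
          · rw [hqx] at hdadj
            rcases (hNx d.toProd.1).mp hdadj.symm with h | ⟨i, h⟩
            · exact hft h
            · exact ((hWA d.toProd.1).mp hfWA).2.2 i h
          by_cases hqy : d.toProd.2 = y
          · rw [hqy] at hdadj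
            exact hft ((hNy d.toProd.1).mp hdadj.symm)
          by_cases hqu : ∃ i, d.toProd.2 = u i
          · obtain ⟨i, hqu⟩ := hqu
            rw [hqu] at hdadj
            exact ((hWA d.toProd.1).mp hfWA).1 ((hNu i d.toProd.1).mp hdadj.symm)
          by_cases hqt : d.toProd.2 = t
          · rw [hqt] at hdadj
            exact hfz (huniq d.toProd.1 hdadj.symm ((hWA d.toProd.1).mp hfWA).1
              ((hWA d.toProd.1).mp hfWA).2.1)
          by_cases hqz : d.toProd.2 = z
          · rw [hqz] at hdadj
            exact hft (hw d.toProd.1 hdadj.symm)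
          · exact hsnd ⟨(hWA d.toProd.2).mpr ⟨hqx, hqy, fun i h => hqu ⟨i, h⟩⟩, hqt, hqz⟩
      · push_neg at h1
        obtain ⟨w, hwWA, hwt, -⟩ := h3 t t
        exfalso
        obtain ⟨p⟩ := hT.isConnected.preconnected w x
        have hwS : w ∈ {v : V | v ∈ WA ∧ v ≠ t} := ⟨hwWA, hwt⟩
        have hxS : x ∉ {v : V | v ∈ WA ∧ v ≠ t} := by
          intro h
          exact ((hWA x).mp h.1).1 rfl
        obtain ⟨d, -, hfst, hsnd⟩ := p.exists_boundary_dart _ hwS hxS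
        obtain ⟨hfWA, hft⟩ := hfst
        have hdadj := d.adj
        by_cases hqx : d.toProd.2 = x
        · rw [hqx] at hdadj
          rcases (hNx d.toProd.1).mp hdadj.symm with h | ⟨i, h⟩
          · exact hft h
          · exact ((hWA d.toProd.1).mp hfWA).2.2 i h
        by_cases hqy : d.toProd.2 = y
        · rw [hqy] at hdadj
          exact hft ((hNy d.toProd.1).mp hdadj.symm)
        by_cases hqu : ∃ i, d.toProd.2 = u i
        · obtain ⟨i, hqu⟩ := hqu
          rw [hqu] at hdadj
          exact ((hWA d.toProd.1).mp hfWA).1 ((hNu i d.toProd.1).mp hdadj.symm)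
        by_cases hqt : d.toProd.2 = t
        · rw [hqt] at hdadj
          exact ((hWA d.toProd.1).mp hfWA).2.1
            (h1 d.toProd.1 hdadj.symm ((hWA d.toProd.1).mp hfWA).1)
        · exact hsnd ⟨(hWA d.toProd.2).mpr ⟨hqx, hqy, fun i h => hqu ⟨i, h⟩⟩, hqt⟩
  obtain ⟨D, hDW, hDd, hDblock⟩ := hwitD
  obtain ⟨R, hDR, hRA, hRd, hRmax⟩ := SimpleGraph.exists_max_dissoc_ext T
    (fun v hv => hDW v hv) hDd
  have htR : t ∉ R := hDblock R hDR hRd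
  have hRW : ∀ v ∈ R, v ∈ WA := fun v hv => hRA hv
  -- the junk set for recovery
  set J : Finset V := insert x (insert (u i0) (insert t (T.neighborFinset t))) with hJdef
  have hJmem : ∀ v, v ∈ J ↔ (v = x ∨ v = u i0 ∨ v = t ∨ T.Adj t v) := by
    intro v
    simp only [hJdef, Finset.mem_insert, SimpleGraph.mem_neighborFinset]
  -- the map
  have hFcases : ∀ S : Finset V, ∃ E : Finset V, T.IsMaxDissocSet S →
      (G'.IsMaxDissocSet E ∧
        ((x ∉ E ∧ E = S) ∨
         (x ∈ E ∧ y ∉ E ∧ u i0 ∈ E ∧ t ∈ E ∧ S = insert x (insert t (E \ J))) ∨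
         (x ∈ E ∧ y ∈ E ∧ S = insert (u i0) E) ∨
         (x ∈ E ∧ y ∉ E ∧ u i0 ∉ E ∧ S = insert y (E \ {t})))) := by
    intro S
    by_cases hS : T.IsMaxDissocSet S
    swap
    · exact ⟨∅, fun h => absurd h hS⟩
    by_cases hx : x ∈ S
    swap
    · exact ⟨S, fun _ => ⟨hM1 S hS hx, Or.inl ⟨hx, rfl⟩⟩⟩
    by_cases htS : t ∈ S
    · -- x ∈ S, t ∈ S
      obtain ⟨hu', hy', hrest⟩ := hS_t S hS.1 hx htS
      have hS0W : ∀ v ∈ S \ {x, t}, v ∈ WA ∧ ¬T.Adj t v := by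
        intro v hv
        have hm := Finset.mem_sdiff.mp hv
        have hvx : v ≠ x := fun h => hm.2 (by rw [h]; exact Finset.mem_insert_self _ _)
        have hvt : v ≠ t := fun h => hm.2
          (by rw [h]; exact Finset.mem_insert_of_mem (Finset.mem_singleton_self _))
        exact hrest v hm.1 hvx hvt
      have hDd' : T.IsDissocSet (insert t (S \ {x, t})) := by
        refine SimpleGraph.dissoc_insert_of_isolated (hS.1.mono Finset.sdiff_subset) ?_
        intro b hb
        exact (hS0W b hb).2
      have hDA' : insert t (S \ {x, t}) ⊆ WA := by
        intro v hv
        rcases Finset.mem_insert.mp hv with h | h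
        · rw [h]; exact htWA
        · exact (hS0W v h).1
      obtain ⟨X, hDX, hXA, hXd, hXmax⟩ := SimpleGraph.exists_max_dissoc_ext T hDA' hDd'
      have htX : t ∈ X := hDX (Finset.mem_insert_self _ _)
      have hS0X : S \ {x, t} ⊆ X := (Finset.subset_insert _ _).trans hDX
      have hXW : ∀ v ∈ X, v ∈ WA := fun v hv => hXA hv
      refine ⟨insert x (insert (u i0) X), fun _ =>
        ⟨hM45 i0 X hXW hXd hXmax, Or.inr (Or.inl ⟨Finset.mem_insert_self _ _, ?_,
          Finset.mem_insert_of_mem (Finset.mem_insert_self _ _),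
          Finset.mem_insert_of_mem (Finset.mem_insert_of_mem htX), ?_⟩)⟩⟩
      · intro hyE
        rcases Finset.mem_insert.mp hyE with h | h
        · exact hxy_ne h.symm
        rcases Finset.mem_insert.mp h with h | h
        · exact huy i0 h.symm
        · exact ((hWA y).mp (hXW y h)).2.1 rfl
      · have hEJ : (insert x (insert (u i0) X)) \ J = S \ {x, t} := by
          ext v
          constructor
          · intro hv
            have hvE := (Finset.mem_sdiff.mp hv).1
            have hvJ := (Finset.mem_sdiff.mp hv).2
            have hvx : v ≠ x := fun h => hvJ ((hJmem v).mpr (Or.inl h))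
            have hvu0 : v ≠ u i0 := fun h => hvJ ((hJmem v).mpr (Or.inr (Or.inl h)))
            have hvt : v ≠ t := fun h => hvJ ((hJmem v).mpr (Or.inr (Or.inr (Or.inl h))))
            have hvadj : ¬T.Adj t v := fun h =>
              hvJ ((hJmem v).mpr (Or.inr (Or.inr (Or.inr h))))
            have hvX : v ∈ X := by
              rcases Finset.mem_insert.mp hvE with h | h
              · exact absurd h hvx
              rcases Finset.mem_insert.mp h with h | h
              · exact absurd h hvu0
              · exact h
            rw [Finset.mem_sdiff]
            refine ⟨?_, fun h => (Finset.mem_insert.mp h).elim hvx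
              (fun h' => hvt (Finset.mem_singleton.mp h'))⟩
            by_contra hvS
            exact hP2max S hS hx htS v (hXW v hvX) hvadj hvS
              (hXd.mono (Finset.insert_subset hvX hS0X))
          · intro hv
            have hWAv := (hS0W v hv).1
            obtain ⟨hvx, hvy, hvu⟩ := (hWA v).mp hWAv
            have hvt : v ≠ t := fun h => (Finset.mem_sdiff.mp hv).2
              (by rw [h]; exact Finset.mem_insert_of_mem (Finset.mem_singleton_self _))
            rw [Finset.mem_sdiff]
            refine ⟨Finset.mem_insert_of_mem (Finset.mem_insert_of_mem (hS0X hv)), ?_⟩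
            intro hvJ
            rcases (hJmem v).mp hvJ with h | h | h | h
            · exact hvx h
            · exact hvu i0 h
            · exact hvt h
            · exact (hS0W v hv).2 h
        rw [hEJ, ← Finset.pair_union_eq]
        have hxt_sub : ({x, t} : Finset V) ⊆ S :=
          Finset.insert_subset hx (Finset.singleton_subset_iff.mpr htS)
        exact (Finset.union_sdiff_of_subset hxt_sub).symm
    · -- x ∈ S, t ∉ S
      have hyS : y ∈ S := hS_y S hS htS
      obtain ⟨j, hj⟩ := hS_j S hS hx htS
      by_cases hu0 : u i0 ∈ S
      · -- u i0 ∈ S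
        have hXP : ∀ v ∈ S \ {x, u i0, y}, v ∈ WA ∧ v ≠ t := by
          intro v hv
          have hm := Finset.mem_sdiff.mp hv
          have h1 : v ≠ x := fun h => hm.2 (by rw [h]; exact Finset.mem_insert_self _ _)
          have h2 : v ≠ u i0 := fun h => hm.2
            (by rw [h]; exact Finset.mem_insert_of_mem (Finset.mem_insert_self _ _))
          have h3' : v ≠ y := fun h => hm.2 (by
            rw [h]
            exact Finset.mem_insert_of_mem (Finset.mem_insert_of_mem (Finset.mem_singleton_self _)))
          exact hS_jW S hS.1 hx htS i0 hu0 v hm.1 h1 h2 h3'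
        have hXd : T.IsDissocSet (S \ {x, u i0, y}) := hS.1.mono Finset.sdiff_subset
        have hXmax : ∀ w ∈ WA, w ≠ t → w ∉ S \ {x, u i0, y} →
            ¬T.IsDissocSet (insert w (S \ {x, u i0, y})) := by
          intro w hw hwt hwX
          have hwS : w ∉ S := by
            intro hwS
            obtain ⟨hh1, hh2, hh4⟩ := (hWA w).mp hw
            refine hwX (Finset.mem_sdiff.mpr ⟨hwS, ?_⟩)
            intro hmem
            rcases Finset.mem_insert.mp hmem with h | hmem
            · exact hh1 h
            rcases Finset.mem_insert.mp hmem with h | hmem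
            · exact hh4 i0 h
            · exact hh2 (Finset.mem_singleton.mp hmem)
          exact hP1max S hS hx htS i0 hu0 hyS w hw hwt hwS
        have hEeq : S \ {u i0} = insert x (insert y (S \ {x, u i0, y})) := by
          ext v
          simp only [Finset.mem_sdiff, Finset.mem_insert, Finset.mem_singleton]
          constructor
          · rintro ⟨hvS, hvu0⟩
            by_cases hc1 : v = x
            · exact Or.inl hc1
            by_cases hc2 : v = y
            · exact Or.inr (Or.inl hc2)
            · exact Or.inr (Or.inr ⟨hvS, fun h => h.elim hc1
                (fun h' => h'.elim hvu0 hc2)⟩)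
          · rintro (h | h | ⟨hvS, hvnot⟩)
            · rw [h]; exact ⟨hx, fun hh => hux i0 hh.symm⟩
            · rw [h]; exact ⟨hyS, fun hh => huy i0 hh.symm⟩
            · exact ⟨hvS, fun h => hvnot (Or.inr (Or.inl h))⟩
        refine ⟨S \ {u i0}, fun _ => ⟨?_, Or.inr (Or.inr (Or.inl ⟨?_, ?_, ?_⟩))⟩⟩
        · rw [hEeq]; exact hM2 _ hXP hXd hXmax
        · exact Finset.mem_sdiff.mpr ⟨hx,
            fun h => hux i0 (Finset.mem_singleton.mp h).symm⟩
        · exact Finset.mem_sdiff.mpr ⟨hyS,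
            fun h => huy i0 (Finset.mem_singleton.mp h).symm⟩
        · rw [← Finset.erase_eq]
          exact (Finset.insert_erase hu0).symm
      · -- u i0 ∉ S, u j ∈ S
        have hXP : ∀ v ∈ S \ {x, u j, y}, v ∈ WA ∧ v ≠ t := by
          intro v hv
          have hm := Finset.mem_sdiff.mp hv
          have h1 : v ≠ x := fun h => hm.2 (by rw [h]; exact Finset.mem_insert_self _ _)
          have h2 : v ≠ u j := fun h => hm.2
            (by rw [h]; exact Finset.mem_insert_of_mem (Finset.mem_insert_self _ _))
          have h3' : v ≠ y := fun h => hm.2 (by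
            rw [h]
            exact Finset.mem_insert_of_mem (Finset.mem_insert_of_mem (Finset.mem_singleton_self _)))
          exact hS_jW S hS.1 hx htS j hj v hm.1 h1 h2 h3'
        have hXd : T.IsDissocSet (S \ {x, u j, y}) := hS.1.mono Finset.sdiff_subset
        have hXmax : ∀ w ∈ WA, w ≠ t → w ∉ S \ {x, u j, y} →
            ¬T.IsDissocSet (insert w (S \ {x, u j, y})) := by
          intro w hw hwt hwX
          have hwS : w ∉ S := by
            intro hwS
            obtain ⟨hh1, hh2, hh4⟩ := (hWA w).mp hw
            refine hwX (Finset.mem_sdiff.mpr ⟨hwS, ?_⟩)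
            intro hmem
            rcases Finset.mem_insert.mp hmem with h | hmem
            · exact hh1 h
            rcases Finset.mem_insert.mp hmem with h | hmem
            · exact hh4 j h
            · exact hh2 (Finset.mem_singleton.mp hmem)
          exact hP1max S hS hx htS j hj hyS w hw hwt hwS
        have hEeq : S \ {y} = insert x (insert (u j) (S \ {x, u j, y})) := by
          ext v
          simp only [Finset.mem_sdiff, Finset.mem_insert, Finset.mem_singleton]
          constructor
          · rintro ⟨hvS, hvy⟩
            by_cases hc1 : v = x
            · exact Or.inl hc1
            by_cases hc2 : v = u j
            · exact Or.inr (Or.inl hc2)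
            · exact Or.inr (Or.inr ⟨hvS, fun h => h.elim hc1
                (fun h' => h'.elim hc2 hvy)⟩)
          · rintro (h | h | ⟨hvS, hvnot⟩)
            · rw [h]; exact ⟨hx, hxy_ne⟩
            · rw [h]; exact ⟨hj, huy j⟩
            · exact ⟨hvS, fun h => hvnot (Or.inr (Or.inr h))⟩
        have hu0E : u i0 ∉ S \ {y} := fun h => hu0 (Finset.mem_sdiff.mp h).1
        have hyE : y ∉ S \ {y} := fun h =>
          (Finset.mem_sdiff.mp h).2 (Finset.mem_singleton_self _)
        have hxE : x ∈ S \ {y} := Finset.mem_sdiff.mpr ⟨hx,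
          fun h => hxy_ne (Finset.mem_singleton.mp h)⟩
        have hrecov : S = insert y (S \ {y}) := by
          rw [← Finset.erase_eq]
          exact (Finset.insert_erase hyS).symm
        by_cases hdis : G'.IsDissocSet (insert t (insert x (insert (u j)
            (S \ {x, u j, y}))))
        · refine ⟨insert t (S \ {y}), fun _ =>
            ⟨?_, Or.inr (Or.inr (Or.inr ⟨?_, ?_, ?_, ?_⟩))⟩⟩
          · rw [hEeq]; exact hM3a j _ hXP hXmax hdis
          · exact Finset.mem_insert_of_mem hxE
          · intro h
            rcases Finset.mem_insert.mp h with h | h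
            · exact hyt_ne h
            · exact hyE h
          · intro h
            rcases Finset.mem_insert.mp h with h | h
            · exact hut i0 h
            · exact hu0E h
          · have h5 : (insert t (S \ {y})) \ {t} = S \ {y} := by
              ext v
              simp only [Finset.mem_sdiff, Finset.mem_insert, Finset.mem_singleton]
              constructor
              · rintro ⟨h | h, hvt⟩
                · exact absurd h hvt
                · exact h
              · rintro ⟨hvS, hvy⟩
                exact ⟨Or.inr ⟨hvS, hvy⟩, fun h => htS (h ▸ hvS)⟩
            rw [h5]; exact hrecov
        · refine ⟨S \ {y}, fun _ =>
            ⟨?_, Or.inr (Or.inr (Or.inr ⟨hxE, hyE, hu0E, ?_⟩))⟩⟩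
          · rw [hEeq]; exact hM3b j _ hXP hXd hXmax hdis
          · have h5 : (S \ {y}) \ {t} = S \ {y} := by
              ext v
              simp only [Finset.mem_sdiff, Finset.mem_singleton]
              constructor
              · rintro ⟨h, -⟩; exact h
              · rintro ⟨hvS, hvy⟩
                exact ⟨⟨hvS, hvy⟩, fun h => htS (h ▸ hvS)⟩
            rw [h5]; exact hrecov
  choose F hF using hFcases
  unfold SimpleGraph.phi
  have hZmem : G'.IsMaxDissocSet (insert x (insert (u i0) R)) := hM45 i0 R hRW hRd hRmax
  have himg : F '' {S : Finset V | T.IsMaxDissocSet S} ⊆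
      {S : Finset V | G'.IsMaxDissocSet S} := by
    rintro E ⟨S, hSmem, rfl⟩
    exact (hF S hSmem).1
  have hinjOn : Set.InjOn F {S : Finset V | T.IsMaxDissocSet S} := by
    intro S₁ h₁ S₂ h₂ heq
    obtain ⟨-, hc₁⟩ := hF S₁ h₁
    obtain ⟨-, hc₂⟩ := hF S₂ h₂
    rw [heq] at hc₁
    rcases hc₁ with ⟨a1, r1⟩ | ⟨a1, b1, c1, d1, r1⟩ | ⟨a1, b1, r1⟩ | ⟨a1, b1, c1, r1⟩ <;>
      rcases hc₂ with ⟨a2, r2⟩ | ⟨a2, b2, c2, d2, r2⟩ | ⟨a2, b2, r2⟩ | ⟨a2, b2, c2, r2⟩ <;>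
      first
        | (exact absurd a2 a1)
        | (exact absurd a1 a2)
        | (exact absurd b2 b1)
        | (exact absurd b1 b2)
        | (exact absurd c1 c2)
        | (exact absurd c2 c1)
        | (exact r1.symm.trans r2)
        | (exact r1.trans r2.symm)
  have hZnot : (insert x (insert (u i0) R)) ∉
      F '' {S : Finset V | T.IsMaxDissocSet S} := by
    rintro ⟨S, hSmem, hFS⟩
    obtain ⟨-, hc⟩ := hF S hSmem
    rw [hFS] at hc
    have hxZ : x ∈ insert x (insert (u i0) R) := Finset.mem_insert_self _ _
    have hu0Z : u i0 ∈ insert x (insert (u i0) R) :=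
      Finset.mem_insert_of_mem (Finset.mem_insert_self _ _)
    have hyZ : y ∉ insert x (insert (u i0) R) := by
      intro h
      rcases Finset.mem_insert.mp h with h | h
      · exact hxy_ne h.symm
      rcases Finset.mem_insert.mp h with h | h
      · exact huy i0 h.symm
      · exact ((hWA y).mp (hRW y h)).2.1 rfl
    have htZ : t ∉ insert x (insert (u i0) R) := by
      intro h
      rcases Finset.mem_insert.mp h with h | h
      · exact hxt_ne h.symm
      rcases Finset.mem_insert.mp h with h | h
      · exact hut i0 h.symm
      · exact htR h
    rcases hc with ⟨a, -⟩ | ⟨-, -, -, d, -⟩ | ⟨-, b, -⟩ | ⟨-, -, c, -⟩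
    · exact a hxZ
    · exact htZ d
    · exact hyZ b
    · exact c hu0Z
  have hss : F '' {S : Finset V | T.IsMaxDissocSet S} ⊂
      {S : Finset V | G'.IsMaxDissocSet S} := by
    refine ssubset_of_subset_of_ne himg (fun h => hZnot ?_)
    rw [h]
    exact hZmem
  calc ({S : Finset V | T.IsMaxDissocSet S}).ncard
      = (F '' {S : Finset V | T.IsMaxDissocSet S}).ncard :=
        (Set.ncard_image_of_injOn hinjOn).symm
    _ < ({S : Finset V | G'.IsMaxDissocSet S}).ncard :=
        Set.ncard_lt_ncard hss (Set.toFinite _)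
end

section
/- Let T be a tree of order n ≥ 5 and let v be a support vertex of T that is adjacent to at least three leaves. Let T' be the tree of order n−1 obtained from T by deleting one leaf of T adjacent to v. If Φ(T') ≤ 3^{(n−2)/3} + (n−2)/3, then Φ(T) < 3^{(n−1)/3} + (n−1)/3. -/
namespace SimpleGraph

variable {V : Type*} [DecidableEq V] {G : SimpleGraph V} [DecidableRel G.Adj] {S S' : Finset V}

omit [DecidableRel G.Adj] in
lemma dissoc_mono (h : S ⊆ S') (hd : G.IsDissocSet S') : G.IsDissocSet S :=
  fun a ha b hb c hc => hd a (h ha) b (h hb) c (h hc)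

omit [DecidableRel G.Adj] in
lemma max_iff : G.IsMaxDissocSet S ↔
    G.IsDissocSet S ∧ ∀ x ∉ S, ¬ G.IsDissocSet (insert x S) := by
  constructor
  · rintro ⟨hd, hm⟩
    refine ⟨hd, fun x hx hins => ?_⟩
    have := hm _ hins (Finset.subset_insert _ _)
    exact hx (this ▸ Finset.mem_insert_self x S)
  · rintro ⟨hd, hm⟩
    refine ⟨hd, fun T hT hST => ?_⟩
    by_contra hne
    obtain ⟨x, hxT, hxS⟩ := Finset.exists_of_ssubset (lt_of_le_of_ne hST hne)
    exact hm x hxS (dissoc_mono (Finset.insert_subset hxT hST) hT)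

/-- maximality for the graph with `u` deleted, transported to `Finset V`. -/
def MaxD' {V : Type*} [DecidableEq V] (G : SimpleGraph V) (u : V) (Q : Finset V) : Prop :=
  G.IsDissocSet Q ∧ ∀ x, x ≠ u → x ∉ Q → ¬ G.IsDissocSet (insert x Q)

section induce
variable (u : V)

noncomputable local instance : DecidablePred (· ∈ ({u}ᶜ : Set V)) := Classical.decPred _

omit [DecidableRel G.Adj] in
lemma phi_induce_eq :
    (G.induce ({u}ᶜ : Set V)).phi = Set.ncard {Q : Finset V | u ∉ Q ∧ G.MaxD' u Q} := by
  classical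
  set e : ↥({u}ᶜ : Set V) ↪ V := Function.Embedding.subtype _ with he
  have hmem : ∀ (S' : Finset ↥({u}ᶜ : Set V)) (x : ↥({u}ᶜ : Set V)),
      x ∈ S' ↔ (x : V) ∈ S'.map e := by
    intro S' x
    exact (Finset.mem_map' e).symm
  have hdiss : ∀ S' : Finset ↥({u}ᶜ : Set V),
      (G.induce ({u}ᶜ : Set V)).IsDissocSet S' ↔ G.IsDissocSet (S'.map e) := by
    intro S'
    constructor
    · intro h a ha b hb c hc hab hac
      simp only [Finset.mem_map, he] at ha hb hc
      obtain ⟨a', ha', rfl⟩ := ha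
      obtain ⟨b', hb', rfl⟩ := hb
      obtain ⟨c', hc', rfl⟩ := hc
      have : b' = c' := h a' ha' b' hb' c' hc' (by simpa using hab) (by simpa using hac)
      simp [this]
    · intro h a ha b hb c hc hab hac
      have : (b : V) = (c : V) := h a ((hmem S' a).1 ha) b ((hmem S' b).1 hb) c
        ((hmem S' c).1 hc) (by simpa using hab) (by simpa using hac)
      exact Subtype.ext this
  have hmax : ∀ S' : Finset ↥({u}ᶜ : Set V),
      (G.induce ({u}ᶜ : Set V)).IsMaxDissocSet S' ↔
        (u ∉ S'.map e ∧ G.MaxD' u (S'.map e)) := by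
    intro S'
    rw [max_iff]
    have humem : u ∉ S'.map e := by
      simp only [Finset.mem_map, he]
      rintro ⟨⟨x, hx⟩, -, hxe⟩
      simp only [Function.Embedding.subtype, Function.Embedding.coeFn_mk] at hxe
      exact hx hxe
    constructor
    · rintro ⟨hd, hm⟩
      refine ⟨humem, (hdiss S').1 hd, fun x hxu hxQ hins => ?_⟩
      have hx : x ∈ ({u}ᶜ : Set V) := by simpa using hxu
      refine hm ⟨x, hx⟩ (fun hmem' => hxQ ((hmem S' ⟨x, hx⟩).1 hmem')) ?_
      have : (insert (⟨x, hx⟩ : ↥({u}ᶜ : Set V)) S').map e = insert x (S'.map e) := by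
        rw [Finset.map_insert]; rfl
      rw [hdiss, this]; exact hins
    · rintro ⟨-, hd, hm⟩
      refine ⟨(hdiss S').2 hd, fun x hx hins => ?_⟩
      refine hm (x : V) (fun h => x.2 (by simp [h])) (fun h => hx ((hmem S' x).2 h)) ?_
      have : (insert x S').map e = insert (x : V) (S'.map e) := by
        rw [Finset.map_insert]; rfl
      rw [hdiss, this] at hins; exact hins
  rw [phi]
  rw [← Set.ncard_image_of_injective {S' | (G.induce ({u}ᶜ : Set V)).IsMaxDissocSet S'}
    (Finset.map_injective e)]
  congr 1
  ext Q
  simp only [Set.mem_image, Set.mem_setOf_eq]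
  constructor
  · rintro ⟨S', hS', rfl⟩
    exact (hmax S').1 hS'
  · rintro ⟨huQ, hQ⟩
    refine ⟨Q.subtype _, ?_, ?_⟩
    · rw [hmax]
      have : (Q.subtype (· ∈ ({u}ᶜ : Set V))).map e = Q := by
        rw [he, Finset.subtype_map, Finset.filter_true_of_mem]
        intro x hx
        simp only [Set.mem_compl_iff, Set.mem_singleton_iff]
        rintro rfl; exact huQ hx
      rw [this]; exact ⟨huQ, hQ⟩
    · rw [he, Finset.subtype_map, Finset.filter_true_of_mem]
      intro x hx
      simp only [Set.mem_compl_iff, Set.mem_singleton_iff]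
      rintro rfl; exact huQ hx

end induce

section main
variable {v u u1 u2 : V}

omit [DecidableRel G.Adj] in
lemma leaf_mem (hS : G.IsMaxDissocSet S) (hv : v ∉ S) {w : V} (hvw : G.Adj v w)
    (hLw : ∀ x, G.Adj w x → x = v) : w ∈ S := by
  by_contra hw
  refine (max_iff.1 hS).2 w hw ?_
  intro a ha b hb c hc hab hac
  rcases Finset.mem_insert.1 ha with rfl | haS
  · rw [hLw b hab, hLw c hac]
  · have hbS : b ∈ S := by
      rcases Finset.mem_insert.1 hb with rfl | h
      · exact absurd (hLw a hab.symm ▸ haS) hv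
      · exact h
    have hcS : c ∈ S := by
      rcases Finset.mem_insert.1 hc with rfl | h
      · exact absurd (hLw a hac.symm ▸ haS) hv
      · exact h
    exact (max_iff.1 hS).1 a haS b hbS c hcS hab hac

omit [DecidableEq V] [DecidableRel G.Adj] in
lemma uniq_nbr (hd : G.IsDissocSet S) (hvS : v ∈ S) (huS : u ∈ S) (hvu : G.Adj v u)
    {w : V} (hvw : G.Adj v w) (hwS : w ∈ S) : w = u :=
  hd v hvS w hwS u huS hvw hvu

omit [DecidableRel G.Adj] in
/-- Case `v ∉ S`:  `S.erase u` is `MaxD'` for the graph minus `u`. -/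
lemma eraseA (hvu : G.Adj v u) (hvu1 : G.Adj v u1) (hvu2 : G.Adj v u2)
    (hLu : ∀ x, G.Adj u x → x = v) (hL1 : ∀ x, G.Adj u1 x → x = v)
    (hL2 : ∀ x, G.Adj u2 x → x = v) (h12 : u1 ≠ u2) (hu1 : u ≠ u1) (hu2 : u ≠ u2)
    (hS : G.IsMaxDissocSet S) (hv : v ∉ S) : G.MaxD' u (S.erase u) := by
  have hu1S : u1 ∈ S := leaf_mem hS hv hvu1 hL1
  have hu2S : u2 ∈ S := leaf_mem hS hv hvu2 hL2
  refine ⟨dissoc_mono (Finset.erase_subset _ _) (max_iff.1 hS).1, ?_⟩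
  intro x hxu hxQ hdins
  by_cases hxv : x = v
  · subst hxv
    exact h12 (hdins x (Finset.mem_insert_self _ _)
      u1 (Finset.mem_insert_of_mem (Finset.mem_erase.2 ⟨hu1.symm, hu1S⟩))
      u2 (Finset.mem_insert_of_mem (Finset.mem_erase.2 ⟨hu2.symm, hu2S⟩)) hvu1 hvu2)
  · have hxS : x ∉ S := fun h => hxQ (Finset.mem_erase.2 ⟨hxu, h⟩)
    refine (max_iff.1 hS).2 x hxS ?_
    intro a ha b hb c hc hab hac
    by_cases hau : a = u
    · subst hau; rw [hLu b hab, hLu c hac]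
    · have hbu : b ≠ u := by
        rintro rfl
        have hav : a = v := hLu a hab.symm
        rcases Finset.mem_insert.1 ha with rfl | h
        · exact hxv hav
        · exact hv (hav ▸ h)
      have hcu : c ≠ u := by
        rintro rfl
        have hav : a = v := hLu a hac.symm
        rcases Finset.mem_insert.1 ha with rfl | h
        · exact hxv hav
        · exact hv (hav ▸ h)
      have mem' : ∀ y, y ∈ insert x S → y ≠ u → y ∈ insert x (S.erase u) := by
        intro y hy hyu
        rcases Finset.mem_insert.1 hy with rfl | h
        · exact Finset.mem_insert_self _ _
        · exact Finset.mem_insert_of_mem (Finset.mem_erase.2 ⟨hyu, h⟩)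
      exact hdins a (mem' a ha hau) b (mem' b hb hbu) c (mem' c hc hcu) hab hac

omit [DecidableRel G.Adj] in
/-- Case `v ∈ S`, `u ∈ S` (so unique nbr is `u`); swap `u` for a leaf `w`. -/
lemma swap_leaf {w : V} (hvu : G.Adj v u) (hvw : G.Adj v w)
    (hLu : ∀ x, G.Adj u x → x = v) (hLw : ∀ x, G.Adj w x → x = v) (huw : u ≠ w)
    (hS : G.IsMaxDissocSet S) (hvS : v ∈ S) (huS : u ∈ S) :
    G.MaxD' u (insert w (S.erase u)) := by
  have hd := (max_iff.1 hS).1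
  have hwS : w ∉ S := fun h => huw (uniq_nbr hd hvS huS hvu hvw h).symm
  have hvQ : v ∈ insert w (S.erase u) :=
    Finset.mem_insert_of_mem (Finset.mem_erase.2 ⟨hvu.ne, hvS⟩)
  constructor
  · -- dissociation
    intro a ha b hb c hc hab hac
    by_cases haw : a = w
    · subst haw; rw [hLw b hab, hLw c hac]
    · have haS : a ∈ S.erase u := (Finset.mem_insert.1 ha).resolve_left haw
      by_cases hbw : b = w
      · by_cases hcw : c = w
        · rw [hbw, hcw]
        · exfalso
          rw [hbw] at hab
          have hav : a = v := hLw a hab.symm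
          rw [hav] at hac
          have hcS : c ∈ S.erase u := (Finset.mem_insert.1 hc).resolve_left hcw
          exact (Finset.mem_erase.1 hcS).1
            (uniq_nbr hd hvS huS hvu hac (Finset.mem_of_mem_erase hcS))
      · have hbS : b ∈ S.erase u := (Finset.mem_insert.1 hb).resolve_left hbw
        by_cases hcw : c = w
        · exfalso
          rw [hcw] at hac
          have hav : a = v := hLw a hac.symm
          rw [hav] at hab
          exact (Finset.mem_erase.1 hbS).1
            (uniq_nbr hd hvS huS hvu hab (Finset.mem_of_mem_erase hbS))
        · have hcS : c ∈ S.erase u := (Finset.mem_insert.1 hc).resolve_left hcw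
          exact hd a (Finset.mem_of_mem_erase haS) b (Finset.mem_of_mem_erase hbS)
            c (Finset.mem_of_mem_erase hcS) hab hac
  · -- maximality
    intro x hxu hxQ hdins
    have hxw : x ≠ w := fun h => hxQ (h ▸ Finset.mem_insert_self _ _)
    have hxS : x ∉ S := fun h =>
      hxQ (Finset.mem_insert_of_mem (Finset.mem_erase.2 ⟨hxu, h⟩))
    refine (max_iff.1 hS).2 x hxS ?_
    intro a ha b hb c hc hab hac
    by_cases hau : a = u
    · subst hau; rw [hLu b hab, hLu c hac]
    · have mem' : ∀ y, y ∈ insert x S → y ≠ u → y ∈ insert x (insert w (S.erase u)) := by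
        intro y hy hyu
        rcases Finset.mem_insert.1 hy with rfl | h
        · exact Finset.mem_insert_self _ _
        · exact Finset.mem_insert_of_mem (Finset.mem_insert_of_mem
            (Finset.mem_erase.2 ⟨hyu, h⟩))
      have key : ∀ y, y ∈ insert x S → G.Adj v y → y ≠ u → False := by
        intro y hy hvy hyu
        have hyQ : y ∈ insert x (insert w (S.erase u)) := mem' y hy hyu
        have : w = y := hdins v (mem' v (Finset.mem_insert_of_mem hvS) hvu.ne)
          w (Finset.mem_insert_of_mem (Finset.mem_insert_self _ _)) y hyQ hvw hvy
        subst this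
        rcases Finset.mem_insert.1 hy with h | h
        · exact hxw h.symm
        · exact hwS h
      by_cases hbu : b = u
      · by_cases hcu : c = u
        · rw [hbu, hcu]
        · exfalso
          rw [hbu] at hab
          have hav : a = v := hLu a hab.symm
          rw [hav] at hac
          exact key c hc hac hcu
      · by_cases hcu : c = u
        · exfalso
          rw [hcu] at hac
          have hav : a = v := hLu a hac.symm
          rw [hav] at hab
          exact key b hb hab hbu
        · exact hdins a (mem' a ha hau) b (mem' b hb hbu) c (mem' c hc hcu) hab hac

omit [DecidableRel G.Adj] in
/-- the base set for the completion injection is dissociative. -/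
lemma base_dissoc (hvu : G.Adj v u) (hvu1 : G.Adj v u1) (hvu2 : G.Adj v u2)
    (hL1 : ∀ x, G.Adj u1 x → x = v) (hL2 : ∀ x, G.Adj u2 x → x = v)
    (hd : G.IsDissocSet S) (hvS : v ∈ S) :
    G.IsDissocSet (insert u1 (insert u2 (S.erase v))) := by
  have memS : ∀ y, y ∈ insert u1 (insert u2 (S.erase v)) → y ≠ u1 → y ≠ u2 →
      y ∈ S.erase v := by
    intro y hy h1 h2
    rcases Finset.mem_insert.1 hy with h | h
    · exact absurd h h1
    · exact (Finset.mem_insert.1 h).resolve_left h2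
  intro a ha b hb c hc hab hac
  by_cases ha1 : a = u1
  · rw [ha1] at hab hac; rw [hL1 b hab, hL1 c hac]
  by_cases ha2 : a = u2
  · rw [ha2] at hab hac; rw [hL2 b hab, hL2 c hac]
  have haS := memS a ha ha1 ha2
  have hbS : b ∈ S.erase v := by
    refine memS b hb ?_ ?_
    · rintro rfl; exact (Finset.mem_erase.1 haS).1 (hL1 a hab.symm)
    · rintro rfl; exact (Finset.mem_erase.1 haS).1 (hL2 a hab.symm)
  have hcS : c ∈ S.erase v := by
    refine memS c hc ?_ ?_
    · rintro rfl; exact (Finset.mem_erase.1 haS).1 (hL1 a hac.symm)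
    · rintro rfl; exact (Finset.mem_erase.1 haS).1 (hL2 a hac.symm)
  exact hd a (Finset.mem_of_mem_erase haS) b (Finset.mem_of_mem_erase hbS)
    c (Finset.mem_of_mem_erase hcS) hab hac

/-- any maximal dissociation superset of the base set avoids `v` and determines `S`. -/
lemma completion_spec (hvu : G.Adj v u) (hvu1 : G.Adj v u1) (hvu2 : G.Adj v u2)
    (hLu : ∀ x, G.Adj u x → x = v) (h12 : u1 ≠ u2)
    (hS : G.IsMaxDissocSet S) (hvS : v ∈ S) (huS : u ∈ S)
    {M : Finset V} (hM : G.IsMaxDissocSet M)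
    (hBM : insert u1 (insert u2 (S.erase v)) ⊆ M) :
    v ∉ M ∧ S = insert v (insert u (M.filter (fun x => ¬G.Adj v x ∧ x ≠ v))) := by
  have hd := (max_iff.1 hS).1
  have hu1M : u1 ∈ M := hBM (Finset.mem_insert_self _ _)
  have hu2M : u2 ∈ M := hBM (Finset.mem_insert_of_mem (Finset.mem_insert_self _ _))
  have hvM : v ∉ M := fun hv =>
    h12 (hM.1 v hv u1 hu1M u2 hu2M hvu1 hvu2)
  refine ⟨hvM, ?_⟩
  ext x
  simp only [Finset.mem_insert, Finset.mem_filter]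
  constructor
  · intro hx
    by_cases hxv : x = v
    · exact Or.inl hxv
    by_cases hxu : x = u
    · exact Or.inr (Or.inl hxu)
    refine Or.inr (Or.inr ⟨?_, ?_, hxv⟩)
    · exact hBM (Finset.mem_insert_of_mem (Finset.mem_insert_of_mem
        (Finset.mem_erase.2 ⟨hxv, hx⟩)))
    · intro hadj
      exact hxu (uniq_nbr hd hvS huS hvu hadj hx)
  · rintro (rfl | rfl | ⟨hxM, hnadj, hxv⟩)
    · exact hvS
    · exact huS
    by_contra hxS
    have hins : G.IsDissocSet (insert x (insert u1 (insert u2 (S.erase v)))) :=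
      dissoc_mono (Finset.insert_subset hxM hBM) hM.1
    refine (max_iff.1 hS).2 x hxS ?_
    intro a ha b hb c hc hab hac
    have mem'' : ∀ y, y ∈ insert x S → y ≠ v →
        y ∈ insert x (insert u1 (insert u2 (S.erase v))) := by
      intro y hy hyv
      rcases Finset.mem_insert.1 hy with rfl | h
      · exact Finset.mem_insert_self _ _
      · exact Finset.mem_insert_of_mem (Finset.mem_insert_of_mem
          (Finset.mem_insert_of_mem (Finset.mem_erase.2 ⟨hyv, h⟩)))
    have nbr : ∀ y, y ∈ insert x S → G.Adj v y → y = u := by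
      intro y hy hvy
      rcases Finset.mem_insert.1 hy with rfl | h
      · exact absurd hvy hnadj
      · exact uniq_nbr hd hvS huS hvu hvy h
    by_cases hav : a = v
    · rw [hav] at hab hac
      rw [nbr b hb hab, nbr c hc hac]
    by_cases hbv : b = v
    · rw [hbv] at hab
      have hau : a = u := nbr a ha hab.symm
      rw [hau] at hac
      rw [hbv, hLu c hac]
    by_cases hcv : c = v
    · rw [hcv] at hac
      have hau : a = u := nbr a ha hac.symm
      rw [hau] at hab
      rw [hcv, hLu b hab]
    exact hins a (mem'' a ha hav) b (mem'' b hb hbv) c (mem'' c hc hcv) hab hac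

omit [DecidableRel G.Adj] in
lemma exists_max_superset [Fintype V] (hd : G.IsDissocSet S) :
    ∃ M, S ⊆ M ∧ G.IsMaxDissocSet M := by
  classical
  obtain ⟨M, hM, hMmax⟩ := Finset.exists_max_image
    (Finset.univ.filter (fun T : Finset V => G.IsDissocSet T ∧ S ⊆ T)) Finset.card
    ⟨S, by simp [hd]⟩
  simp only [Finset.mem_filter, Finset.mem_univ, true_and] at hM hMmax
  refine ⟨M, hM.2, hM.1, fun T hT hMT => ?_⟩
  exact Finset.eq_of_subset_of_card_le hMT (hMmax T ⟨hT, hM.2.trans hMT⟩)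

lemma count_key [Fintype V] (hvu : G.Adj v u) (hvu1 : G.Adj v u1) (hvu2 : G.Adj v u2)
    (hLu : ∀ x, G.Adj u x → x = v) (hL1 : ∀ x, G.Adj u1 x → x = v)
    (hL2 : ∀ x, G.Adj u2 x → x = v) (h12 : u1 ≠ u2) (hu1 : u ≠ u1) (hu2 : u ≠ u2) :
    3 * Set.ncard {S : Finset V | G.IsMaxDissocSet S} ≤
      4 * Set.ncard {Q : Finset V | u ∉ Q ∧ G.MaxD' u Q} := by
  classical
  set Mset : Set (Finset V) := {S | G.IsMaxDissocSet S} with hMset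
  set Bu : Set (Finset V) := {S | G.IsMaxDissocSet S ∧ v ∈ S ∧ u ∈ S} with hBu
  set Nset : Set (Finset V) := {Q | u ∉ Q ∧ G.MaxD' u Q} with hNset
  set N1 : Set (Finset V) := {Q | (u ∉ Q ∧ G.MaxD' u Q) ∧ v ∉ Q} with hN1
  set N2 : Set (Finset V) := {Q | (u ∉ Q ∧ G.MaxD' u Q) ∧ v ∈ Q ∧ u1 ∈ Q} with hN2
  set N3 : Set (Finset V) := {Q | (u ∉ Q ∧ G.MaxD' u Q) ∧ v ∈ Q ∧ u2 ∈ Q} with hN3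
  have hsub : Bu ⊆ Mset := fun S hS => hS.1
  have split : (Mset \ Bu).ncard + Bu.ncard = Mset.ncard :=
    Set.ncard_diff_add_ncard_of_subset hsub (Set.toFinite _)
  -- c1 : Mset \ Bu injects into Nset
  have c1 : (Mset \ Bu).ncard ≤ Nset.ncard := by
    apply Set.ncard_le_ncard_of_injOn (fun S => if v ∈ S then S else S.erase u)
    · rintro S ⟨hmax, hnot⟩
      by_cases hvS : v ∈ S
      · have huS : u ∉ S := fun h => hnot ⟨hmax, hvS, h⟩
        simp only [if_pos hvS, hNset, Set.mem_setOf_eq]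
        exact ⟨huS, (max_iff.1 hmax).1, fun x _ hxS => (max_iff.1 hmax).2 x hxS⟩
      · simp only [if_neg hvS, hNset, Set.mem_setOf_eq]
        exact ⟨Finset.notMem_erase _ _,
          eraseA hvu hvu1 hvu2 hLu hL1 hL2 h12 hu1 hu2 hmax hvS⟩
    · rintro S ⟨hmaxS, -⟩ S' ⟨hmaxS', -⟩ h
      by_cases hvS : v ∈ S <;> by_cases hvS' : v ∈ S'
      · simpa only [if_pos hvS, if_pos hvS'] using h
      · exfalso
        simp only [if_pos hvS, if_neg hvS'] at h
        exact hvS' (Finset.mem_of_mem_erase (h ▸ hvS))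
      · exfalso
        simp only [if_neg hvS, if_pos hvS'] at h
        exact hvS (Finset.mem_of_mem_erase (h.symm ▸ hvS'))
      · simp only [if_neg hvS, if_neg hvS'] at h
        have huS : u ∈ S := leaf_mem hmaxS hvS hvu hLu
        have huS' : u ∈ S' := leaf_mem hmaxS' hvS' hvu hLu
        rw [← Finset.insert_erase huS, h, Finset.insert_erase huS']
  -- c2 : Bu injects into N1 via completion
  have c2 : Bu.ncard ≤ N1.ncard := by
    set F : Finset V → Finset V := fun S =>
      if h : G.IsDissocSet (insert u1 (insert u2 (S.erase v))) then
        (exists_max_superset h).choose.erase u else ∅ with hF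
    apply Set.ncard_le_ncard_of_injOn F
    · rintro S ⟨hmax, hvS, huS⟩
      have hbase := base_dissoc hvu hvu1 hvu2 hL1 hL2 (max_iff.1 hmax).1 hvS
      obtain ⟨hBM, hMmax⟩ := (exists_max_superset hbase).choose_spec
      obtain ⟨hvM, -⟩ := completion_spec hvu hvu1 hvu2 hLu h12 hmax hvS huS hMmax hBM
      simp only [hF, dif_pos hbase, hN1, Set.mem_setOf_eq]
      exact ⟨⟨Finset.notMem_erase _ _,
        eraseA hvu hvu1 hvu2 hLu hL1 hL2 h12 hu1 hu2 hMmax hvM⟩,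
        fun h => hvM (Finset.mem_of_mem_erase h)⟩
    · rintro S ⟨hmax, hvS, huS⟩ S' ⟨hmax', hvS', huS'⟩ h
      have hbase := base_dissoc hvu hvu1 hvu2 hL1 hL2 (max_iff.1 hmax).1 hvS
      have hbase' := base_dissoc hvu hvu1 hvu2 hL1 hL2 (max_iff.1 hmax').1 hvS'
      obtain ⟨hBM, hMmax⟩ := (exists_max_superset hbase).choose_spec
      obtain ⟨hBM', hMmax'⟩ := (exists_max_superset hbase').choose_spec
      obtain ⟨hvM, hSrec⟩ := completion_spec hvu hvu1 hvu2 hLu h12 hmax hvS huS hMmax hBM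
      obtain ⟨hvM', hSrec'⟩ :=
        completion_spec hvu hvu1 hvu2 hLu h12 hmax' hvS' huS' hMmax' hBM'
      simp only [hF, dif_pos hbase, dif_pos hbase'] at h
      have huM : u ∈ (exists_max_superset hbase).choose := leaf_mem hMmax hvM hvu hLu
      have huM' : u ∈ (exists_max_superset hbase').choose := leaf_mem hMmax' hvM' hvu hLu
      have hMM : (exists_max_superset hbase).choose = (exists_max_superset hbase').choose := by
        rw [← Finset.insert_erase huM, h, Finset.insert_erase huM']
      rw [hSrec, hSrec', hMM]
  -- c3, c4 : Bu injects into N2 (resp. N3) via leaf swap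
  have cswap : ∀ (w : V), G.Adj v w → (∀ x, G.Adj w x → x = v) → u ≠ w →
      Bu.ncard ≤ {Q : Finset V | (u ∉ Q ∧ G.MaxD' u Q) ∧ v ∈ Q ∧ w ∈ Q}.ncard := by
    intro w hvw hLw huw
    apply Set.ncard_le_ncard_of_injOn (fun S => insert w (S.erase u))
    · rintro S ⟨hmax, hvS, huS⟩
      refine ⟨⟨?_, swap_leaf hvu hvw hLu hLw huw hmax hvS huS⟩, ?_,
        Finset.mem_insert_self _ _⟩
      · simp only [Finset.mem_insert]
        rintro (h | h)
        · exact huw h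
        · exact (Finset.mem_erase.1 h).1 rfl
      · exact Finset.mem_insert_of_mem (Finset.mem_erase.2 ⟨hvu.ne, hvS⟩)
    · rintro S ⟨hmax, hvS, huS⟩ S' ⟨hmax', hvS', huS'⟩ h
      replace h : insert w (S.erase u) = insert w (S'.erase u) := h
      have hwS : w ∉ S.erase u := fun hh => huw
        (uniq_nbr (max_iff.1 hmax).1 hvS huS hvu hvw (Finset.mem_of_mem_erase hh)).symm
      have hwS' : w ∉ S'.erase u := fun hh => huw
        (uniq_nbr (max_iff.1 hmax').1 hvS' huS' hvu hvw (Finset.mem_of_mem_erase hh)).symm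
      have : S.erase u = S'.erase u := by
        rw [← Finset.erase_insert hwS, h, Finset.erase_insert hwS']
      rw [← Finset.insert_erase huS, this, Finset.insert_erase huS']
  have c3 : Bu.ncard ≤ N2.ncard := cswap u1 hvu1 hL1 hu1
  have c4 : Bu.ncard ≤ N3.ncard := cswap u2 hvu2 hL2 hu2
  -- c5 : the three families are disjoint subfamilies of Nset
  have hd12 : Disjoint N1 N2 := by
    rw [Set.disjoint_left]
    rintro Q ⟨-, hvQ⟩ ⟨-, hvQ', -⟩
    exact hvQ hvQ'
  have hd13 : Disjoint N1 N3 := by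
    rw [Set.disjoint_left]
    rintro Q ⟨-, hvQ⟩ ⟨-, hvQ', -⟩
    exact hvQ hvQ'
  have hd23 : Disjoint N2 N3 := by
    rw [Set.disjoint_left]
    rintro Q ⟨⟨-, hQd, -⟩, hvQ, h1Q⟩ ⟨-, -, h2Q⟩
    exact h12 (hQd v hvQ u1 h1Q u2 h2Q hvu1 hvu2)
  have c5 : N1.ncard + N2.ncard + N3.ncard ≤ Nset.ncard := by
    have e1 : (N1 ∪ N2).ncard = N1.ncard + N2.ncard :=
      Set.ncard_union_eq hd12 (Set.toFinite _) (Set.toFinite _)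
    have e2 : (N1 ∪ N2 ∪ N3).ncard = (N1 ∪ N2).ncard + N3.ncard :=
      Set.ncard_union_eq (Disjoint.union_left hd13 hd23) (Set.toFinite _) (Set.toFinite _)
    have hsubN : N1 ∪ N2 ∪ N3 ⊆ Nset := by
      rintro Q ((h | h) | h)
      exacts [h.1, h.1, h.1]
    calc N1.ncard + N2.ncard + N3.ncard = (N1 ∪ N2 ∪ N3).ncard := by rw [e2, e1]
      _ ≤ Nset.ncard := Set.ncard_le_ncard hsubN (Set.toFinite _)
  omega

end main
end SimpleGraph

lemma arith_key {n p q : ℝ} (hn : 5 ≤ n)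
    (hpq : 3 * p ≤ 4 * q)
    (hq : q ≤ 3 ^ ((n - 2) / 3) + (n - 2) / 3) :
    p < 3 ^ ((n - 1) / 3) + (n - 1) / 3 := by
  set t : ℝ := 3 ^ ((1:ℝ)/3) with htdef
  set Q : ℝ := 3 ^ ((n - 5) / 3) with hQdef
  have h3 : (0:ℝ) < 3 := by norm_num
  have ht_pos : 0 < t := Real.rpow_pos_of_pos h3 _
  have hQ_pos : 0 < Q := Real.rpow_pos_of_pos h3 _
  have ht3 : t ^ (3:ℕ) = 3 := by
    rw [htdef, ← Real.rpow_natCast (3 ^ ((1:ℝ)/3)) 3, ← Real.rpow_mul (le_of_lt h3)]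
    norm_num
  have ht_lb : (1.4422 : ℝ) ≤ t := by
    by_contra hlt
    push_neg at hlt
    have : t ^ (3:ℕ) < (1.4422:ℝ) ^ (3:ℕ) := by
      apply pow_lt_pow_left₀ hlt (le_of_lt ht_pos)
      norm_num
    rw [ht3] at this
    norm_num at this
  have hlog : (1.03 : ℝ) ≤ Real.log 3 := by
    rw [Real.le_log_iff_exp_le h3]
    have e1 : Real.exp 1 < 2.7182818286 := Real.exp_one_lt_d9
    have e2 : Real.exp 0.03 ≤ 1 / 0.97 := by
      have h := Real.add_one_le_exp (-0.03 : ℝ)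
      rw [Real.exp_neg] at h
      have hp : 0 < Real.exp (0.03:ℝ) := Real.exp_pos _
      have h2 : (0.97:ℝ) * Real.exp 0.03 ≤ (Real.exp (0.03:ℝ))⁻¹ * Real.exp 0.03 := by
        apply mul_le_mul_of_nonneg_right _ (le_of_lt hp)
        linarith
      rw [inv_mul_cancel₀ (ne_of_gt hp)] at h2
      linarith
    have : Real.exp (1.03:ℝ) = Real.exp 1 * Real.exp 0.03 := by
      rw [← Real.exp_add]; norm_num
    rw [this]
    calc Real.exp 1 * Real.exp 0.03 ≤ 2.7182818286 * (1/0.97) :=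
          mul_le_mul e1.le e2 (Real.exp_pos _).le (by norm_num)
      _ ≤ 3 := by norm_num
  have hQ_lb : 1 + (103/300) * (n - 5) ≤ Q := by
    have h0 : (0:ℝ) ≤ (n - 5) / 3 := by linarith
    rw [hQdef, Real.rpow_def_of_pos h3]
    have hmul : (103/300) * (n-5) ≤ ((n - 5) / 3) * Real.log 3 := by
      have := mul_le_mul_of_nonneg_left hlog h0
      nlinarith
    calc 1 + (103/300) * (n-5) ≤ 1 + ((n-5)/3) * Real.log 3 := by linarith
      _ ≤ Real.exp (((n-5)/3) * Real.log 3) := by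
          linarith [Real.add_one_le_exp (((n - 5) / 3) * Real.log 3)]
      _ = Real.exp (Real.log 3 * ((n-5)/3)) := by ring_nf
  have hsplit2 : (3:ℝ) ^ ((n - 2) / 3) = 3 * Q := by
    have he : (n-2)/3 = (n-5)/3 + 1 := by ring
    rw [hQdef, he, Real.rpow_add h3, Real.rpow_one]
    ring
  have hsplit1 : (3:ℝ) ^ ((n - 1) / 3) = 3 * Q * t := by
    have he : (n-1)/3 = ((n-5)/3 + 1) + 1/3 := by ring
    rw [htdef, hQdef, he, Real.rpow_add h3, Real.rpow_add h3, Real.rpow_one]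
    ring
  rw [hsplit1]
  rw [hsplit2] at hq
  have h1 : (0:ℝ) ≤ 3*t - 4 := by linarith
  have h3' : (0:ℝ) ≤ 1 + (103/300) * (n - 5) := by nlinarith
  have h2 : (3*t-4) * (1 + (103/300)*(n-5)) ≤ (3*t-4)*Q :=
    mul_le_mul_of_nonneg_left hQ_lb h1
  have hlow : (0.3266:ℝ) * (1 + (103/300)*(n-5)) ≤ (3*t-4) * (1 + (103/300)*(n-5)) :=
    mul_le_mul_of_nonneg_right (by linarith) h3'
  nlinarith [h2, hlow, hq, hpq, hn]


/-- Lemma 3: deleting one leaf of a support vertex with at least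
three leaves. -/
theorem phi_lt_of_delete_leaf {V : Type*} [Fintype V] [DecidableEq V]
    (T : SimpleGraph V) [DecidableRel T.Adj] (hT : T.IsTree)
    (hn : 5 ≤ Fintype.card V) (v u : V)
    (hleaves : 3 ≤ {w : V | T.Adj v w ∧ T.degree w = 1}.ncard)
    (hu : T.Adj v u) (hud : T.degree u = 1)
    (hT' : ((T.induce ({u}ᶜ : Set V)).phi : ℝ) ≤
      3 ^ (((Fintype.card V : ℝ) - 2) / 3) + ((Fintype.card V : ℝ) - 2) / 3) :
    (T.phi : ℝ) <
      3 ^ (((Fintype.card V : ℝ) - 1) / 3) + ((Fintype.card V : ℝ) - 1) / 3 := by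
  classical
  set L : Set V := {w : V | T.Adj v w ∧ T.degree w = 1} with hLdef
  have huL : u ∈ L := ⟨hu, hud⟩
  have hdiff : 1 < (L \ {u}).ncard := by
    rw [Set.ncard_diff_singleton_of_mem huL]
    omega
  obtain ⟨u1, u2, h1m, h2m, h12⟩ := (Set.one_lt_ncard_iff (Set.toFinite _)).1 hdiff
  obtain ⟨hvu1, hdeg1⟩ := (Set.mem_diff _).1 h1m |>.1
  obtain ⟨hvu2, hdeg2⟩ := (Set.mem_diff _).1 h2m |>.1
  have hu1 : u ≠ u1 := fun h => ((Set.mem_diff _).1 h1m).2 (by simp [h.symm])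
  have hu2 : u ≠ u2 := fun h => ((Set.mem_diff _).1 h2m).2 (by simp [h.symm])
  have leafU : ∀ w, T.Adj v w → T.degree w = 1 → ∀ x, T.Adj w x → x = v := by
    intro w hadj hdeg x hwx
    have hv' : w ∈ T.neighborFinset v → True := fun _ => trivial
    have hvmem : v ∈ T.neighborFinset w := (T.mem_neighborFinset w v).2 hadj.symm
    have hxmem : x ∈ T.neighborFinset w := (T.mem_neighborFinset w x).2 hwx
    have hcard : (T.neighborFinset w).card ≤ 1 := le_of_eq hdeg
    exact Finset.card_le_one.1 hcard x hxmem v hvmem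
  have count := SimpleGraph.count_key (G := T) (v := v) (u := u) (u1 := u1) (u2 := u2)
    hu hvu1 hvu2 (leafU u hu hud) (leafU u1 hvu1 hdeg1) (leafU u2 hvu2 hdeg2) h12 hu1 hu2
  rw [← SimpleGraph.phi_induce_eq] at count
  have hphi : T.phi = Set.ncard {S : Finset V | T.IsMaxDissocSet S} := rfl
  rw [← hphi] at count
  have hn' : (5:ℝ) ≤ (Fintype.card V : ℝ) := by exact_mod_cast hn
  have hpq : 3 * (T.phi : ℝ) ≤ 4 * ((T.induce ({u}ᶜ : Set V)).phi : ℝ) := by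
    exact_mod_cast count
  exact arith_key hn' hpq hT'
end
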